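/- arXiv:1706.03558 — 5 statements merged into one kernel-verified Lean document; each statement's English description precedes it below -/
import Mathlib

section
/- There exist κ ≥ 1/2 and π ∈ ℝ^{N−1} such that the pair (s, w) given by s := λ₁ − κ⁻¹ xᵀr and w := κx + Xπ solves the system (∗), i.e. Sw = sw + r and ‖w‖² = 1 + ρ. -/
open Matrix

private lemma decomp_aux (m : ℕ) (x : Fin (m+1) → ℝ) (X : Matrix (Fin (m+1)) (Fin m) ℝ)
    (hxx : x ⬝ᵥ x = 1)
    (hxX : ∀ j, x ⬝ᵥ (fun i => X i j) = 0)
    (hXX : ∀ j k, (fun i => X i j) ⬝ᵥ (fun i => X i k) = if j = k then (1 : ℝ) else 0)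
    (r : Fin (m+1) → ℝ) :
    r = (x ⬝ᵥ r) • x + X *ᵥ (fun j => (fun i => X i j) ⬝ᵥ r) := by
  set M : Matrix (Fin (m+1)) (Fin (m+1)) ℝ :=
    Matrix.of fun i j => Fin.cases (x i) (fun k => X i k) j with hM
  have hMtM : Mᵀ * M = 1 := by
    ext j k
    rw [Matrix.mul_apply, Matrix.one_apply]
    simp only [Matrix.transpose_apply, hM, Matrix.of_apply]
    induction j using Fin.cases with
    | zero =>
      induction k using Fin.cases with
      | zero => simpa [dotProduct] using hxx
      | succ k => simpa [dotProduct, (Fin.succ_ne_zero k).symm] using hxX k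
    | succ j =>
      induction k using Fin.cases with
      | zero =>
        have := hxX j
        simp only [dotProduct] at this
        simpa [Fin.succ_ne_zero j, mul_comm] using this
      | succ k =>
        have := hXX j k
        simp only [dotProduct] at this
        simpa [Fin.succ_inj] using this
  have hMMt : M * Mᵀ = 1 := mul_eq_one_comm.mp hMtM
  have h0 : M *ᵥ (Mᵀ *ᵥ r) = r := by
    rw [Matrix.mulVec_mulVec, hMMt, Matrix.one_mulVec]
  conv_lhs => rw [← h0]
  funext i
  have e1 : (M *ᵥ (Mᵀ *ᵥ r)) i = ∑ j, M i j * ∑ i', M i' j * r i' := by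
    simp [Matrix.mulVec, dotProduct, Matrix.transpose_apply]
  rw [e1, Fin.sum_univ_succ]
  simp only [hM, Matrix.of_apply, Fin.cases_zero, Fin.cases_succ, Pi.add_apply, Pi.smul_apply,
    smul_eq_mul, Matrix.mulVec, dotProduct]
  ring

set_option maxHeartbeats 2000000 in
/-- Lemma 5.6 (i) of Hakula–Laaksonen: existence of the solution `(s, w)` of the
perturbed eigenvalue system `S w = s w + r`, `‖w‖² = 1 + ρ`. -/
theorem stmt0 (N : ℕ) (hN : 2 ≤ N)
    (S : Matrix (Fin N) (Fin N) ℝ)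
    (x : Fin N → ℝ) (X : Matrix (Fin N) (Fin (N - 1)) ℝ)
    (lam1 : ℝ) (lam2 : Fin (N - 1) → ℝ)
    (hSx : S *ᵥ x = lam1 • x)
    (hSX : ∀ j, S *ᵥ (fun i => X i j) = lam2 j • (fun i => X i j))
    (hxx : x ⬝ᵥ x = 1)
    (hxX : ∀ j, x ⬝ᵥ (fun i => X i j) = 0)
    (hXX : ∀ j k, (fun i => X i j) ⬝ᵥ (fun i => X i k) = if j = k then (1 : ℝ) else 0)
    (hord : Antitone lam2)
    (hsep : lam2 ⟨0, by omega⟩ < lam1)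
    (ρ : ℝ) (r : Fin N → ℝ)
    (hρ : |ρ| ≤ 1 / 2)
    (hr : Real.sqrt (r ⬝ᵥ r) ≤ (lam1 - lam2 ⟨0, by omega⟩) / 8) :
    ∃ κ : ℝ, ∃ π : Fin (N - 1) → ℝ, 1 / 2 ≤ κ ∧
      S *ᵥ (κ • x + X *ᵥ π)
          = (lam1 - κ⁻¹ * (x ⬝ᵥ r)) • (κ • x + X *ᵥ π) + r ∧
      (κ • x + X *ᵥ π) ⬝ᵥ (κ • x + X *ᵥ π) = 1 + ρ := by
  obtain ⟨m, rfl⟩ : ∃ m, N = m + 1 := ⟨N - 1, by omega⟩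
  set z0 : Fin (m + 1 - 1) := ⟨0, by omega⟩ with hz0
  set lam : ℝ := lam1 - lam2 z0 with hlamdef
  have hlam : 0 < lam := by simp [hlamdef]; linarith [hsep]
  set β : ℝ := x ⬝ᵥ r with hβdef
  set a : Fin (m + 1 - 1) → ℝ := fun j => (fun i => X i j) ⬝ᵥ r with hadef
  -- decomposition of r
  have hdec : r = β • x + X *ᵥ a := decomp_aux m x X hxx hxX hXX r
  -- basic orthogonality facts, matrix form
  have hXtX : Xᵀ * X = 1 := by
    ext j k
    rw [Matrix.mul_apply, Matrix.one_apply]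
    have := hXX j k
    simp only [dotProduct] at this
    simpa [Matrix.transpose_apply] using this
  have hXpq : ∀ p q : Fin (m + 1 - 1) → ℝ, (X *ᵥ p) ⬝ᵥ (X *ᵥ q) = p ⬝ᵥ q := by
    intro p q
    rw [Matrix.dotProduct_mulVec, ← Matrix.mulVec_transpose, Matrix.mulVec_mulVec, hXtX,
      Matrix.one_mulVec]
  have hxvX : x ᵥ* X = 0 := by
    funext j
    have := hxX j
    simp only [dotProduct] at this
    simpa [Matrix.vecMul, dotProduct] using this
  have hxXp : ∀ p : Fin (m + 1 - 1) → ℝ, x ⬝ᵥ (X *ᵥ p) = 0 := by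
    intro p
    rw [Matrix.dotProduct_mulVec, hxvX, zero_dotProduct]
  -- norm split of r
  have hrr0 : (0:ℝ) ≤ r ⬝ᵥ r := by
    simp only [dotProduct]
    exact Finset.sum_nonneg fun i _ => mul_self_nonneg _
  have hsplit : r ⬝ᵥ r = β ^ 2 + a ⬝ᵥ a := by
    have e11 : (β • x) ⬝ᵥ (β • x) = β ^ 2 := by
      rw [smul_dotProduct, dotProduct_smul, hxx]
      simp [sq]
    have e12 : (β • x) ⬝ᵥ (X *ᵥ a) = 0 := by
      rw [smul_dotProduct, hxXp]
      simp
    have e21 : (X *ᵥ a) ⬝ᵥ (β • x) = 0 := by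
      rw [dotProduct_comm]
      exact e12
    conv_lhs => rw [hdec]
    rw [add_dotProduct, dotProduct_add, dotProduct_add,
      e11, e12, e21, hXpq]
    ring
  have hrr : r ⬝ᵥ r ≤ lam ^ 2 / 64 := by
    have h1 : r ⬝ᵥ r = Real.sqrt (r ⬝ᵥ r) ^ 2 := (Real.sq_sqrt hrr0).symm
    have h2 : Real.sqrt (r ⬝ᵥ r) ^ 2 ≤ (lam / 8) ^ 2 := by
      apply pow_le_pow_left₀ (Real.sqrt_nonneg _) _ 2
      exact hr
    nlinarith [h1, h2]
  have hβ : |β| ≤ lam / 8 := by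
    have haa : (0:ℝ) ≤ a ⬝ᵥ a := by
      simp only [dotProduct]
      exact Finset.sum_nonneg fun i _ => mul_self_nonneg _
    have hb2 : β ^ 2 ≤ (lam / 8) ^ 2 := by nlinarith
    rw [abs_le]
    constructor <;> nlinarith [sq_nonneg (β - lam / 8), sq_nonneg (β + lam / 8)]
  have haa2 : a ⬝ᵥ a ≤ lam ^ 2 / 64 := by
    have : (0:ℝ) ≤ β ^ 2 := sq_nonneg _
    linarith [hsplit, hrr]
  -- bound on the denominators
  have hd : ∀ (j : Fin (m + 1 - 1)), ∀ κ ∈ Set.Icc (1/2 : ℝ) 2,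
      lam2 j - lam1 + β / κ ≤ -(3/4) * lam := by
    intro j κ hκ
    obtain ⟨hκ1, hκ2⟩ := hκ
    have hκpos : (0:ℝ) < κ := by linarith
    have h1 : β ≤ lam / 8 := (abs_le.mp hβ).2
    have h2 : -(lam / 8) ≤ β := (abs_le.mp hβ).1
    have hβκ : β / κ ≤ lam / 4 := by
      rw [div_le_iff₀ hκpos]
      nlinarith
    have hj : lam2 j ≤ lam2 z0 := hord (by simp [hz0, Fin.le_def])
    linarith [hlamdef]
  have hdneg : ∀ (j : Fin (m + 1 - 1)), ∀ κ ∈ Set.Icc (1/2 : ℝ) 2,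
      lam2 j - lam1 + β / κ ≠ 0 := by
    intro j κ hκ
    have := hd j κ hκ
    nlinarith
  -- the function for IVT
  set F : ℝ → ℝ := fun κ => κ ^ 2 + ∑ j, a j ^ 2 / (lam2 j - lam1 + β / κ) ^ 2 with hF
  have hgbound : ∀ κ ∈ Set.Icc (1/2 : ℝ) 2,
      ∑ j, a j ^ 2 / (lam2 j - lam1 + β / κ) ^ 2 ≤ 1 / 36 := by
    intro κ hκ
    have step : ∀ j : Fin (m + 1 - 1),
        a j ^ 2 / (lam2 j - lam1 + β / κ) ^ 2 ≤ a j ^ 2 / ((3/4) * lam) ^ 2 := by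
      intro j
      have hb : (0:ℝ) < (((3:ℝ)/4) * lam) ^ 2 := pow_pos (by linarith) 2
      have hc : (((3:ℝ)/4) * lam) ^ 2 ≤ (lam2 j - lam1 + β / κ) ^ 2 := by
        nlinarith [hd j κ hκ]
      exact div_le_div_of_nonneg_left (sq_nonneg _) hb hc
    calc ∑ j, a j ^ 2 / (lam2 j - lam1 + β / κ) ^ 2
        ≤ ∑ j, a j ^ 2 / ((3/4) * lam) ^ 2 := Finset.sum_le_sum fun j _ => step j
      _ = (∑ j, a j ^ 2) / ((3/4) * lam) ^ 2 := by rw [Finset.sum_div]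
      _ ≤ (lam ^ 2 / 64) / ((3/4) * lam) ^ 2 := by
          have hsum : ∑ j, a j ^ 2 = a ⬝ᵥ a := by simp [dotProduct, sq]
          gcongr
          rw [hsum]
          exact haa2
      _ = 1 / 36 := by
          have h34 : (((3:ℝ)/4) * lam) ^ 2 ≠ 0 := pow_ne_zero 2 (mul_pos (by norm_num) hlam).ne'
          rw [div_eq_div_iff h34 (by norm_num : (36:ℝ) ≠ 0)]
          ring
  have hgnn : ∀ κ : ℝ, 0 ≤ ∑ j, a j ^ 2 / (lam2 j - lam1 + β / κ) ^ 2 :=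
    fun κ => Finset.sum_nonneg fun j _ => by positivity
  have hFcont : ContinuousOn F (Set.Icc (1/2 : ℝ) 2) := by
    apply ContinuousOn.add (continuousOn_pow 2)
    apply continuousOn_finset_sum
    intro j _
    apply ContinuousOn.div continuousOn_const
    · apply ContinuousOn.pow
      apply ContinuousOn.add continuousOn_const
      apply ContinuousOn.div continuousOn_const continuousOn_id
      intro κ hκ
      exact ne_of_gt (lt_of_lt_of_le (by norm_num) hκ.1)
    · intro κ hκ
      exact pow_ne_zero 2 (hdneg j κ hκ)
  have hmem : (1 + ρ) ∈ Set.Icc (F (1/2)) (F 2) := by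
    have hρ1 : -(1/2) ≤ ρ := (abs_le.mp hρ).1
    have hρ2 : ρ ≤ 1/2 := (abs_le.mp hρ).2
    constructor
    · have hb := hgbound (1/2) (by constructor <;> norm_num)
      have hFe : F (1/2) = (1/2:ℝ) ^ 2 + ∑ j, a j ^ 2 / (lam2 j - lam1 + β / (1/2)) ^ 2 := rfl
      rw [hFe]
      have h14 : ((1:ℝ)/2) ^ 2 = 1/4 := by norm_num
      linarith
    · have hb := hgnn 2
      have hFe : F 2 = (2:ℝ) ^ 2 + ∑ j, a j ^ 2 / (lam2 j - lam1 + β / 2) ^ 2 := rfl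
      rw [hFe]
      have h4 : (2:ℝ) ^ 2 = 4 := by norm_num
      linarith
  obtain ⟨κ, hκmem, hκeq⟩ := intermediate_value_Icc (by norm_num : (1/2:ℝ) ≤ 2) hFcont hmem
  have hκ1 : (1/2 : ℝ) ≤ κ := hκmem.1
  have hκpos : (0:ℝ) < κ := by linarith
  have hκ0 : κ ≠ 0 := ne_of_gt hκpos
  set π : Fin (m + 1 - 1) → ℝ := fun j => a j / (lam2 j - lam1 + β / κ) with hπ
  refine ⟨κ, π, hκ1, ?_, ?_⟩
  · -- eigen equation
    have hSXmat : S * X = X * Matrix.diagonal lam2 := by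
      ext i j
      rw [Matrix.mul_apply]
      have := congrFun (hSX j) i
      simp only [Matrix.mulVec, dotProduct, Pi.smul_apply, smul_eq_mul] at this
      rw [this]
      simp [Matrix.mul_apply, Matrix.diagonal, Finset.sum_ite_eq', mul_comm]
    have hSXp : ∀ p : Fin (m + 1 - 1) → ℝ,
        S *ᵥ (X *ᵥ p) = X *ᵥ (fun j => lam2 j * p j) := by
      intro p
      rw [Matrix.mulVec_mulVec, hSXmat, ← Matrix.mulVec_mulVec]
      congr 1
      funext j
      simp [Matrix.mulVec, dotProduct, Matrix.diagonal, Finset.sum_ite_eq']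
    have e2 : (fun j => lam2 j * π j) = (lam1 - κ⁻¹ * β) • π + a := by
      funext j
      have hDne := hdneg j κ hκmem
      have hc : a j / (lam2 j - lam1 + β / κ) * (lam2 j - lam1 + β / κ) = a j :=
        div_mul_cancel₀ _ hDne
      simp only [Pi.add_apply, Pi.smul_apply, smul_eq_mul, hπ, inv_mul_eq_div]
      linear_combination hc
    have hcoef : (lam1 - κ⁻¹ * β) * κ = κ * lam1 - β := by
      field_simp
    calc S *ᵥ (κ • x + X *ᵥ π)
        = (κ * lam1) • x + X *ᵥ (fun j => lam2 j * π j) := by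
          rw [Matrix.mulVec_add, Matrix.mulVec_smul, hSx, hSXp, smul_smul]
      _ = (κ * lam1) • x + ((lam1 - κ⁻¹ * β) • (X *ᵥ π) + X *ᵥ a) := by
          rw [e2, Matrix.mulVec_add, Matrix.mulVec_smul]
      _ = (lam1 - κ⁻¹ * β) • (κ • x + X *ᵥ π) + r := by
          rw [hdec, smul_add, smul_smul, hcoef]
          module
  · -- norm equation
    have expand : (κ • x + X *ᵥ π) ⬝ᵥ (κ • x + X *ᵥ π) = κ ^ 2 + π ⬝ᵥ π := by
      have e11 : (κ • x) ⬝ᵥ (κ • x) = κ ^ 2 := by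
        rw [smul_dotProduct, dotProduct_smul, hxx]
        simp [sq]
      have e12 : (κ • x) ⬝ᵥ (X *ᵥ π) = 0 := by
        rw [smul_dotProduct, hxXp]
        simp
      have e21 : (X *ᵥ π) ⬝ᵥ (κ • x) = 0 := by
        rw [dotProduct_comm]
        exact e12
      rw [add_dotProduct, dotProduct_add, dotProduct_add,
        e11, e12, e21, hXpq]
      ring
    rw [expand]
    have : π ⬝ᵥ π = ∑ j, a j ^ 2 / (lam2 j - lam1 + β / κ) ^ 2 := by
      simp only [dotProduct, hπ]
      apply Finset.sum_congr rfl
      intro j _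
      rw [div_mul_div_comm]
      ring_nf
    rw [this, ← hκeq]
end

section
/- Let A : Γ → ℝ^{N×N} be a bounded measurable matrix-valued function such that A(y) is positive definite (zᵀA(y)z > 0 for all z ≠ 0) for every y ∈ Γ. Then for every f ∈ W_A^N there exists a unique v ∈ W_A^N such that P_A(A v) = f in L²_ν(Γ; ℝ^N). -/
open Matrix MeasureTheory

private def synth {Γ ι : Type*} [Fintype ι] {N : ℕ} (Λ : ι → Γ → ℝ)
    (c : ι → Fin N → ℝ) : Γ → Fin N → ℝ := fun y i => ∑ α, c α i * Λ α y

/-- Lemma 4.4 (existence/uniqueness part) of Hakula–Laaksonen: for a parametric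
positive-definite matrix `A` the stochastic Galerkin system `P_A(A v) = f` has a
unique solution `v ∈ W_A^N`. -/
theorem stmt4
    {Γ : Type*} [MeasurableSpace Γ] (ν : Measure Γ) [IsProbabilityMeasure ν]
    {ι : Type*} [Fintype ι] [DecidableEq ι]
    (Λ : ι → Γ → ℝ)
    (hΛmeas : ∀ α, Measurable (Λ α))
    (hΛbdd : ∀ α, ∃ C : ℝ, ∀ᵐ y ∂ν, |Λ α y| ≤ C)
    (hortho : ∀ α β, (∫ y, Λ α y * Λ β y ∂ν) = if α = β then 1 else 0)
    (N : ℕ)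
    (A : Γ → Matrix (Fin N) (Fin N) ℝ)
    (hAmeas : ∀ i j, Measurable fun y => A y i j)
    (hAbdd : ∃ C : ℝ, ∀ y i j, |A y i j| ≤ C)
    (hApos : ∀ y, ∀ z : Fin N → ℝ, z ≠ 0 → 0 < z ⬝ᵥ (A y *ᵥ z))
    (f : Γ → Fin N → ℝ)
    (hf : ∃ c : ι → Fin N → ℝ, f = fun y i => ∑ α, c α i * Λ α y) :
    ∃! v : Γ → Fin N → ℝ,
      (∃ c : ι → Fin N → ℝ, v = fun y i => ∑ α, c α i * Λ α y) ∧
      (fun y i => ∑ α, (∫ z, (A z *ᵥ v z) i * Λ α z ∂ν) * Λ α y) = f := by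
  classical
  obtain ⟨CA, hCA⟩ := hAbdd
  -- integrability of products of two Λ's
  have hΛint : ∀ α β : ι, Integrable (fun z => Λ α z * Λ β z) ν := by
    intro α β
    obtain ⟨Cα, hCα⟩ := hΛbdd α
    obtain ⟨Cβ, hCβ⟩ := hΛbdd β
    refine ⟨((hΛmeas α).mul (hΛmeas β)).aestronglyMeasurable,
      HasFiniteIntegral.of_bounded (C := Cα * Cβ) ?_⟩
    filter_upwards [hCα, hCβ] with z h1 h2
    rw [Real.norm_eq_abs, abs_mul]
    exact mul_le_mul h1 h2 (abs_nonneg _) ((abs_nonneg _).trans h1)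
  -- integrability of A-entry times two Λ's
  have hterm : ∀ (i j : Fin N) (α β : ι),
      Integrable (fun z => A z i j * (Λ β z * Λ α z)) ν := by
    intro i j α β
    obtain ⟨Cα, hCα⟩ := hΛbdd α
    obtain ⟨Cβ, hCβ⟩ := hΛbdd β
    refine ⟨((hAmeas i j).mul ((hΛmeas β).mul (hΛmeas α))).aestronglyMeasurable,
      HasFiniteIntegral.of_bounded (C := CA * (Cβ * Cα)) ?_⟩
    filter_upwards [hCα, hCβ] with z h1 h2
    rw [Real.norm_eq_abs, abs_mul, abs_mul]
    exact mul_le_mul (hCA z i j)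
      (mul_le_mul h2 h1 (abs_nonneg _) ((abs_nonneg _).trans h2))
      (mul_nonneg (abs_nonneg _) (abs_nonneg _)) ((abs_nonneg _).trans (hCA z i j))
  -- main integrability fact
  have hI1 : ∀ (c : ι → Fin N → ℝ) (α : ι) (i : Fin N),
      Integrable (fun z => (A z *ᵥ synth Λ c z) i * Λ α z) ν := by
    intro c α i
    have heq : (fun z => (A z *ᵥ synth Λ c z) i * Λ α z)
        = fun z => ∑ j, ∑ β, c β j * (A z i j * (Λ β z * Λ α z)) := by
      funext z
      simp only [Matrix.mulVec, dotProduct, synth, Finset.sum_mul, Finset.mul_sum]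
      exact Finset.sum_congr rfl fun j _ => Finset.sum_congr rfl fun β _ => by ring
    rw [heq]
    exact integrable_finset_sum _ fun j _ =>
      integrable_finset_sum _ fun β _ => (hterm i j α β).const_mul _
  -- coefficient recovery via orthonormality
  have hI2 : ∀ (c : ι → Fin N → ℝ) (α : ι) (i : Fin N),
      (fun z => synth Λ c z i * Λ α z) = fun z => ∑ β, c β i * (Λ β z * Λ α z) := by
    intro c α i
    funext z
    simp only [synth, Finset.sum_mul]
    exact Finset.sum_congr rfl fun β _ => by ring
  have hrecov : ∀ (c : ι → Fin N → ℝ) (α : ι) (i : Fin N),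
      (∫ z, synth Λ c z i * Λ α z ∂ν) = c α i := by
    intro c α i
    rw [hI2, integral_finset_sum _ fun β _ => (hΛint β α).const_mul _]
    have : ∀ β : ι, (∫ z, c β i * (Λ β z * Λ α z) ∂ν) = c β i * if β = α then 1 else 0 := by
      intro β
      rw [integral_const_mul, hortho]
    simp [this]
  -- additivity / homogeneity of synth
  have hsynadd : ∀ (c c' : ι → Fin N → ℝ) (z : Γ),
      synth Λ (c + c') z = synth Λ c z + synth Λ c' z := by
    intro c c' z
    funext j
    simp [synth, add_mul, Finset.sum_add_distrib]
  have hsynsmul : ∀ (r : ℝ) (c : ι → Fin N → ℝ) (z : Γ),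
      synth Λ (r • c) z = r • synth Λ c z := by
    intro r c z
    funext j
    simp [synth, Finset.mul_sum, mul_assoc]
  -- the Galerkin operator
  let T : (ι → Fin N → ℝ) →ₗ[ℝ] (ι → Fin N → ℝ) :=
    { toFun := fun c α i => ∫ z, (A z *ᵥ synth Λ c z) i * Λ α z ∂ν
      map_add' := by
        intro c c'
        funext α i
        simp only [Pi.add_apply]
        have heq : (fun z => (A z *ᵥ synth Λ (c + c') z) i * Λ α z)
            = fun z => (A z *ᵥ synth Λ c z) i * Λ α z
                + (A z *ᵥ synth Λ c' z) i * Λ α z := by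
          funext z
          rw [hsynadd, Matrix.mulVec_add]
          simp [add_mul]
        rw [heq, integral_add (hI1 c α i) (hI1 c' α i)]
      map_smul' := by
        intro r c
        funext α i
        simp only [Pi.smul_apply, RingHom.id_apply, smul_eq_mul]
        have heq : (fun z => (A z *ᵥ synth Λ (r • c) z) i * Λ α z)
            = fun z => r * ((A z *ᵥ synth Λ c z) i * Λ α z) := by
          funext z
          rw [hsynsmul, Matrix.mulVec_smul]
          simp [mul_assoc]
        rw [heq, integral_const_mul] }
  have hT : ∀ (c : ι → Fin N → ℝ) (α : ι) (i : Fin N),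
      T c α i = ∫ z, (A z *ᵥ synth Λ c z) i * Λ α z ∂ν := fun _ _ _ => rfl
  -- quadratic form identity
  have key : ∀ (c : ι → Fin N → ℝ) (z : Γ),
      ∑ α, ∑ i, c α i * ((A z *ᵥ synth Λ c z) i * Λ α z)
        = synth Λ c z ⬝ᵥ (A z *ᵥ synth Λ c z) := by
    intro c z
    rw [Finset.sum_comm]
    simp only [dotProduct, synth, Finset.sum_mul]
    exact Finset.sum_congr rfl fun i _ => Finset.sum_congr rfl fun α _ => by ring
  have hgint : ∀ (c : ι → Fin N → ℝ) (α : ι) (i : Fin N),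
      Integrable (fun z => c α i * ((A z *ᵥ synth Λ c z) i * Λ α z)) ν :=
    fun c α i => (hI1 c α i).const_mul _
  have hquad : ∀ c : ι → Fin N → ℝ,
      ∑ α, ∑ i, c α i * T c α i
        = ∫ z, synth Λ c z ⬝ᵥ (A z *ᵥ synth Λ c z) ∂ν := by
    intro c
    calc ∑ α, ∑ i, c α i * T c α i
        = ∑ α, ∑ i, ∫ z, c α i * ((A z *ᵥ synth Λ c z) i * Λ α z) ∂ν :=
          Finset.sum_congr rfl fun α _ => Finset.sum_congr rfl fun i _ => by
            rw [hT, ← integral_const_mul]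
      _ = ∑ α, ∫ z, ∑ i, c α i * ((A z *ᵥ synth Λ c z) i * Λ α z) ∂ν :=
          Finset.sum_congr rfl fun α _ =>
            (integral_finset_sum _ fun i _ => hgint c α i).symm
      _ = ∫ z, ∑ α, ∑ i, c α i * ((A z *ᵥ synth Λ c z) i * Λ α z) ∂ν :=
          (integral_finset_sum _ fun α _ =>
            integrable_finset_sum _ fun i _ => hgint c α i).symm
      _ = ∫ z, synth Λ c z ⬝ᵥ (A z *ᵥ synth Λ c z) ∂ν :=
          integral_congr_ae (Filter.Eventually.of_forall fun z => key c z)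
  -- injectivity of T
  have hinj : Function.Injective T := by
    rw [← LinearMap.ker_eq_bot, LinearMap.ker_eq_bot']
    intro c hc
    have hzero : (∫ z, synth Λ c z ⬝ᵥ (A z *ᵥ synth Λ c z) ∂ν) = 0 := by
      rw [← hquad c, hc]
      simp
    have hnonneg : ∀ z, 0 ≤ synth Λ c z ⬝ᵥ (A z *ᵥ synth Λ c z) := by
      intro z
      by_cases h : synth Λ c z = 0
      · rw [h]; simp
      · exact le_of_lt (hApos z _ h)
    have hint : Integrable (fun z => synth Λ c z ⬝ᵥ (A z *ᵥ synth Λ c z)) ν := by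
      have heq : (fun z => synth Λ c z ⬝ᵥ (A z *ᵥ synth Λ c z))
          = fun z => ∑ α, ∑ i, c α i * ((A z *ᵥ synth Λ c z) i * Λ α z) :=
        funext fun z => (key c z).symm
      rw [heq]
      exact integrable_finset_sum _ fun α _ =>
        integrable_finset_sum _ fun i _ => hgint c α i
    have hae : (fun z => synth Λ c z ⬝ᵥ (A z *ᵥ synth Λ c z)) =ᵐ[ν] 0 :=
      (integral_eq_zero_iff_of_nonneg hnonneg hint).mp hzero
    have hsae : ∀ᵐ z ∂ν, synth Λ c z = 0 := by
      filter_upwards [hae] with z hz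
      by_contra h
      exact (hApos z _ h).ne' hz
    funext α i
    rw [← hrecov c α i]
    rw [show (0 : ι → Fin N → ℝ) α i = ∫ z, (0 : ℝ) ∂ν by simp]
    refine integral_congr_ae ?_
    filter_upwards [hsae] with z hz
    rw [hz]
    simp
  obtain ⟨cf, rfl⟩ := hf
  obtain ⟨c₀, hc₀⟩ := (LinearMap.injective_iff_surjective).mp hinj cf
  refine ⟨fun y i => ∑ α, c₀ α i * Λ α y, ⟨⟨c₀, rfl⟩, ?_⟩, ?_⟩
  · funext y i
    refine Finset.sum_congr rfl fun α _ => ?_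
    have : T c₀ α i = cf α i := congrFun (congrFun hc₀ α) i
    rw [show (∫ z, (A z *ᵥ (fun y i => ∑ α, c₀ α i * Λ α y) z) i * Λ α z ∂ν)
        = T c₀ α i from rfl, this]
  · rintro v ⟨⟨c, rfl⟩, hv⟩
    have hv' : synth Λ (T c) = synth Λ cf := hv
    have hTc : T c = cf := by
      funext β i
      rw [← hrecov (T c) β i, ← hrecov cf β i]
      refine integral_congr_ae (Filter.Eventually.of_forall fun z => ?_)
      rw [hv']
    have : c = c₀ := hinj (hTc.trans hc₀.symm)
    rw [this]
end

section
/- There exists a constant C > 0, independent of y, such that for all y ∈ Γ: ‖u_A(y) − u_h(y)‖_{ℝ^N_M} ≤ C ( |ρ(y)| + λ̂(y)⁻¹ ‖r(y)‖_{ℝ^N_M} + s(y)⁻¹ ‖M⁻¹ R_A(s P_A(K v))(y)‖_{ℝ^N_M} ). -/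
open Matrix MeasureTheory Module.End
open scoped InnerProductSpace

/-!
Put `w := s⁻¹ v`. The fixed-point equations say exactly that `K⁻¹ M w = s w - r`,
`‖w‖²_M = 1 - ρ` and `u_A = w + s⁻¹ M⁻¹ R_A(s P_A(K v))`. So `w` is an approximate eigenvector of
`K⁻¹ M`, which is self-adjoint for the `M`-inner product, has top eigenvalue `μ_h⁻¹` with
eigenvector `u_h`, and is bounded by `μ₂⁻¹` on `u_h^⊥`. Write `w = c u_h + p` with `p ⊥ u_h`;
dominance gives `c ≥ 1/2`. Testing the equation against `u_h` gives `|s - μ_h⁻¹| ≤ 2‖r‖ ≤ λ̂/4`,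
so `s` stays `3λ̂/4` away from the rest of the spectrum, and testing it against `p` then gives
`‖p‖ ≤ (4/3)‖r‖/λ̂`. Finally `1 - c² = ρ + ‖p‖²` bounds `|1 - c|`, and
`‖w - u_h‖ ≤ ‖p‖ + |1 - c|`.
-/

section SymmetricOperator

variable {E : Type*} [NormedAddCommGroup E] [InnerProductSpace ℝ E] {T : E →ₗ[ℝ] E}

theorem LinearMap.IsSymmetric.inner_map_self_le_of_hasEigenvalue_le [FiniteDimensional ℝ E]
    (hT : T.IsSymmetric) {c : ℝ} (hc : ∀ μ, HasEigenvalue T μ → μ ≤ c) (x : E) :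
    ⟪T x, x⟫_ℝ ≤ c * ‖x‖ ^ 2 := by
  let b := hT.eigenvectorBasis rfl
  have hTb (i) : ⟪T x, b i⟫_ℝ = hT.eigenvalues rfl i * ⟪x, b i⟫_ℝ := by
    rw [hT, hT.apply_eigenvectorBasis, real_inner_smul_right]; rfl
  rw [← b.sum_inner_mul_inner, ← real_inner_self_eq_norm_sq, ← b.sum_inner_mul_inner,
    Finset.mul_sum]
  refine Finset.sum_le_sum fun i _ => ?_
  rw [hTb, real_inner_comm x (b i), mul_assoc]
  exact mul_le_mul_of_nonneg_right (hc _ (hT.hasEigenvalue_eigenvalues rfl i)) (mul_self_nonneg _)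

theorem LinearMap.IsSymmetric.inner_map_self_le_of_inner_eq_zero [FiniteDimensional ℝ E]
    (hT : T.IsSymmetric) {x₀ : E} {θ₀ : ℝ} (hx₀ : T x₀ = θ₀ • x₀) {c : ℝ}
    (hc : ∀ μ z, z ≠ 0 → T z = μ • z → ⟪z, x₀⟫_ℝ = 0 → μ ≤ c) {x : E} (hx : ⟪x, x₀⟫_ℝ = 0) :
    ⟪T x, x⟫_ℝ ≤ c * ‖x‖ ^ 2 := by
  let V := (ℝ ∙ x₀)ᗮ
  have hV : ∀ z ∈ V, T z ∈ V := fun z hz => by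
    rw [Submodule.mem_orthogonal_singleton_iff_inner_left] at hz ⊢
    rw [hT, hx₀, real_inner_smul_right, hz, mul_zero]
  have hTV := hT.restrict_invariant hV
  refine hTV.inner_map_self_le_of_hasEigenvalue_le (fun μ hμ => ?_) ⟨x, ?_⟩
  · obtain ⟨z, hz, hz0⟩ := hμ.exists_hasEigenvector
    rw [mem_eigenspace_iff] at hz
    exact hc μ z (by simpa using hz0) (congrArg Subtype.val hz)
      (Submodule.mem_orthogonal_singleton_iff_inner_left.mp z.2)
  · exact Submodule.mem_orthogonal_singleton_iff_inner_left.mpr hx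

variable {x₀ w r : E} {θ₀ θ₁ s : ℝ}

theorem LinearMap.IsSymmetric.abs_sub_le_of_apply_eq_smul_sub (hT : T.IsSymmetric)
    (hx₀ : T x₀ = θ₀ • x₀) (hx₀1 : ‖x₀‖ = 1) (hw : T w = s • w - r) (hc : 1 / 2 ≤ ⟪w, x₀⟫_ℝ) :
    |s - θ₀| ≤ 2 * ‖r‖ := by
  have key : (s - θ₀) * ⟪w, x₀⟫_ℝ = ⟪r, x₀⟫_ℝ := by
    have := hT w x₀
    rw [hw, hx₀, inner_sub_left, real_inner_smul_left, real_inner_smul_right] at this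
    linarith
  have hr : |⟪r, x₀⟫_ℝ| ≤ ‖r‖ := by simpa [hx₀1] using abs_real_inner_le_norm r x₀
  calc |s - θ₀| ≤ 2 * (|s - θ₀| * ⟪w, x₀⟫_ℝ) := by nlinarith [abs_nonneg (s - θ₀)]
    _ = 2 * |⟪r, x₀⟫_ℝ| := by rw [← key, abs_mul, abs_of_pos (by linarith : 0 < ⟪w, x₀⟫_ℝ)]
    _ ≤ 2 * ‖r‖ := by gcongr

theorem mul_norm_sub_inner_smul_le_of_apply_eq_smul_sub (hx₀ : T x₀ = θ₀ • x₀) (hx₀1 : ‖x₀‖ = 1)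
    (hray : ∀ x, ⟪x, x₀⟫_ℝ = 0 → ⟪T x, x⟫_ℝ ≤ θ₁ * ‖x‖ ^ 2) (hw : T w = s • w - r) :
    (s - θ₁) * ‖w - ⟪w, x₀⟫_ℝ • x₀‖ ≤ ‖r‖ := by
  set c := ⟪w, x₀⟫_ℝ
  set p := w - c • x₀
  have hp : ⟪x₀, p⟫_ℝ = 0 := by
    rw [inner_sub_right, real_inner_smul_right, real_inner_self_eq_norm_sq, hx₀1, real_inner_comm]
    ring
  have hwp : ⟪w, p⟫_ℝ = ‖p‖ ^ 2 := by
    rw [← real_inner_self_eq_norm_sq, show w = p + c • x₀ by simp [p], inner_add_left,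
      real_inner_smul_left, hp, mul_zero, add_zero]
  have hTp : ⟪T p, p⟫_ℝ = s * ‖p‖ ^ 2 - ⟪r, p⟫_ℝ := by
    rw [map_sub, map_smul, hw, hx₀, inner_sub_left, inner_sub_left, real_inner_smul_left,
      real_inner_smul_left, real_inner_smul_left, hwp, hp]
    ring
  have hmain : (s - θ₁) * ‖p‖ * ‖p‖ ≤ ‖r‖ * ‖p‖ := by
    nlinarith [hray p (by rw [real_inner_comm]; exact hp), real_inner_le_norm r p]
  rcases (norm_nonneg p).eq_or_lt with h0 | hpos
  · rw [← h0, mul_zero]; exact norm_nonneg r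
  · exact le_of_mul_le_mul_right hmain hpos

theorem LinearMap.IsSymmetric.norm_sub_le_of_apply_eq_smul_sub (hT : T.IsSymmetric)
    (hx₀ : T x₀ = θ₀ • x₀) (hx₀1 : ‖x₀‖ = 1)
    (hray : ∀ x, ⟪x, x₀⟫_ℝ = 0 → ⟪T x, x⟫_ℝ ≤ θ₁ * ‖x‖ ^ 2) (hθ : θ₁ < θ₀)
    (hw : T w = s • w - r) (hr : 8 * ‖r‖ ≤ θ₀ - θ₁) (hc : 1 / 2 ≤ ⟪w, x₀⟫_ℝ) :
    ‖w - x₀‖ ≤ 3 * (|1 - ‖w‖ ^ 2| + ‖r‖ / (θ₀ - θ₁)) := by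
  set c := ⟪w, x₀⟫_ℝ
  set p := w - c • x₀
  have hgap : 0 < θ₀ - θ₁ := sub_pos.mpr hθ
  have hs := hT.abs_sub_le_of_apply_eq_smul_sub hx₀ hx₀1 hw hc
  have hp : ‖p‖ ≤ 4 / 3 * (‖r‖ / (θ₀ - θ₁)) := by
    have := mul_norm_sub_inner_smul_le_of_apply_eq_smul_sub hx₀ hx₀1 hray hw
    rw [mul_div_assoc', le_div_iff₀ hgap]
    nlinarith [(abs_le.mp hs).1, norm_nonneg p]
  have hpyth : ‖w‖ ^ 2 = ‖p‖ ^ 2 + c ^ 2 := by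
    have hpx : ⟪p, c • x₀⟫_ℝ = 0 := by
      rw [real_inner_smul_right, inner_sub_left, real_inner_smul_left,
        real_inner_self_eq_norm_sq, hx₀1]
      ring
    rw [show w = p + c • x₀ by simp [p], sq, norm_add_sq_eq_norm_sq_add_norm_sq_real hpx,
      norm_smul, hx₀1, mul_one, Real.norm_eq_abs, abs_mul_abs_self]
    ring
  have hc1 : |1 - c| ≤ |1 - ‖w‖ ^ 2| + ‖p‖ ^ 2 := by
    have h1c : 0 < 1 + c := by linarith
    calc |1 - c| ≤ |1 - c| * (1 + c) := le_mul_of_one_le_right (abs_nonneg _) (by linarith)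
      _ = |(1 - ‖w‖ ^ 2) + ‖p‖ ^ 2| := by
        rw [← abs_of_pos h1c, ← abs_mul, hpyth]; ring_nf
      _ ≤ |1 - ‖w‖ ^ 2| + ‖p‖ ^ 2 := (abs_add_le _ _).trans_eq (by rw [abs_sq])
  have hp_le_one : ‖p‖ ≤ 1 := by
    have : ‖r‖ / (θ₀ - θ₁) ≤ 1 / 8 := by rw [div_le_iff₀ hgap]; linarith
    linarith
  calc ‖w - x₀‖ = ‖p - (1 - c) • x₀‖ := by congr 1; simp only [p]; module
    _ ≤ ‖p‖ + |1 - c| := by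
      refine (norm_sub_le _ _).trans_eq ?_
      rw [norm_smul, hx₀1, mul_one, Real.norm_eq_abs]
    _ ≤ |1 - ‖w‖ ^ 2| + 2 * ‖p‖ := by nlinarith [norm_nonneg p]
    _ ≤ 3 * (|1 - ‖w‖ ^ 2| + ‖r‖ / (θ₀ - θ₁)) := by
      nlinarith [abs_nonneg (1 - ‖w‖ ^ 2), div_nonneg (norm_nonneg r) hgap.le]

end SymmetricOperator

section PositiveDefiniteMatrix

variable {n : Type*} [Fintype n] {M K : Matrix n n ℝ}

noncomputable def Matrix.weightedNorm (M : Matrix n n ℝ) (x : n → ℝ) : ℝ :=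
  √(x ⬝ᵥ (M *ᵥ x))

theorem Matrix.PosDef.of_transpose_eq (hsymm : Mᵀ = M)
    (hpos : ∀ x, x ≠ 0 → 0 < x ⬝ᵥ (M *ᵥ x)) : M.PosDef :=
  .of_dotProduct_mulVec_pos (by rw [IsHermitian, conjTranspose_eq_transpose_of_trivial, hsymm])
    (by simpa using hpos)

theorem Matrix.IsHermitian.mulVec_dotProduct (hM : M.IsHermitian) (x y : n → ℝ) :
    (M *ᵥ x) ⬝ᵥ y = x ⬝ᵥ (M *ᵥ y) := by
  rw [dotProduct_mulVec, ← mulVec_transpose, ← conjTranspose_eq_transpose_of_trivial, hM.eq,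
    dotProduct_comm]

theorem Matrix.PosDef.exists_linearEquiv_inner_eq [DecidableEq n] (hM : M.PosDef) :
    ∃ e : (n → ℝ) ≃ₗ[ℝ] EuclideanSpace ℝ n, ∀ x y, ⟪e x, e y⟫_ℝ = x ⬝ᵥ (M *ᵥ y) := by
  open scoped MatrixOrder in
  obtain ⟨S, hS, hSS⟩ : ∃ S : Matrix n n ℝ, S.IsHermitian ∧ S * S = M :=
    ⟨CFC.sqrt M, (CFC.sqrt_nonneg M).posSemidef.isHermitian,
      CFC.sqrt_mul_sqrt_self M hM.posSemidef.nonneg⟩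
  have hdet : IsUnit S.det := by
    rw [isUnit_iff_ne_zero, ← mul_self_ne_zero, ← det_mul, hSS]
    exact hM.det_pos.ne'
  refine ⟨(S.toLinearEquiv' (S.invertibleOfIsUnitDet hdet)).trans
    (WithLp.linearEquiv 2 ℝ (n → ℝ)).symm, fun x y => ?_⟩
  change ⟪WithLp.toLp 2 (S *ᵥ x), WithLp.toLp 2 (S *ᵥ y)⟫_ℝ = _
  rw [EuclideanSpace.inner_toLp_toLp, star_trivial, hS.mulVec_dotProduct, mulVec_mulVec, hSS,
    ← hM.isHermitian.mulVec_dotProduct, dotProduct_comm]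

theorem Matrix.PosDef.weightedNorm_add_le [DecidableEq n] (hM : M.PosDef) (x y : n → ℝ) :
    M.weightedNorm (x + y) ≤ M.weightedNorm x + M.weightedNorm y := by
  obtain ⟨e, he⟩ := hM.exists_linearEquiv_inner_eq
  simp only [weightedNorm, ← he, ← norm_eq_sqrt_real_inner, map_add, norm_add_le]

theorem Matrix.weightedNorm_smul (M : Matrix n n ℝ) (c : ℝ) (x : n → ℝ) :
    M.weightedNorm (c • x) = |c| * M.weightedNorm x := by
  rw [weightedNorm, weightedNorm, mulVec_smul, smul_dotProduct, dotProduct_smul, smul_eq_mul,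
    smul_eq_mul, ← mul_assoc, Real.sqrt_mul (mul_self_nonneg c), Real.sqrt_mul_self_eq_abs]

theorem Matrix.PosDef.pos_of_mulVec_eq_smul_mulVec (hM : M.PosDef) (hK : K.PosDef) {θ : ℝ}
    {u : n → ℝ} (hu : u ≠ 0) (h : M *ᵥ u = θ • (K *ᵥ u)) : 0 < θ := by
  have hMu := hM.dotProduct_mulVec_pos hu
  have hKu := hK.dotProduct_mulVec_pos hu
  rw [star_trivial, h, dotProduct_smul, smul_eq_mul] at hMu
  rw [star_trivial] at hKu
  exact pos_of_mul_pos_left hMu hKu.le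

end PositiveDefiniteMatrix

section GeneralizedEigenproblem

variable {n : Type*} [Fintype n] [DecidableEq n] {M K : Matrix n n ℝ} {μ₀ μ₁ s : ℝ}
  {u₀ : n → ℝ}

theorem Matrix.PosDef.weightedNorm_sub_le_of_mulVec_eq (hM : M.PosDef) (hK : K.PosDef)
    (hμ₀ : 0 < μ₀) (hμ₁ : 0 < μ₁) (hu₀ : K *ᵥ u₀ = μ₀ • (M *ᵥ u₀))
    (hu₀1 : u₀ ⬝ᵥ (M *ᵥ u₀) = 1)
    (hmin : ∀ μ z, z ≠ 0 → K *ᵥ z = μ • (M *ᵥ z) → z ⬝ᵥ (M *ᵥ u₀) = 0 → μ₁ ≤ μ)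
    (hgap : μ₁⁻¹ < μ₀⁻¹) {w r : n → ℝ} (hw : M *ᵥ w = K *ᵥ (s • w - r))
    (hr : 8 * M.weightedNorm r ≤ μ₀⁻¹ - μ₁⁻¹) (hc : 1 / 2 ≤ w ⬝ᵥ (M *ᵥ u₀)) :
    M.weightedNorm (w - u₀) ≤
      3 * (|1 - w ⬝ᵥ (M *ᵥ w)| + M.weightedNorm r / (μ₀⁻¹ - μ₁⁻¹)) := by
  obtain ⟨e, he⟩ := hM.exists_linearEquiv_inner_eq
  have hnorm (x : n → ℝ) : ‖e x‖ = M.weightedNorm x := by rw [norm_eq_sqrt_real_inner, he]; rfl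
  have hKdet : IsUnit K.det := hK.det_pos.ne'.isUnit
  have hKK (x : n → ℝ) : K⁻¹ *ᵥ (K *ᵥ x) = x := by
    rw [mulVec_mulVec, nonsing_inv_mul _ hKdet, one_mulVec]
  have hKK' (x : n → ℝ) : K *ᵥ (K⁻¹ *ᵥ x) = x := by
    rw [mulVec_mulVec, mul_nonsing_inv _ hKdet, one_mulVec]
  let T := e.conj (toLin' (K⁻¹ * M))
  have hTe (x : n → ℝ) : T (e x) = e (K⁻¹ *ᵥ (M *ᵥ x)) := by
    simp [T, LinearEquiv.conj_apply, mulVec_mulVec]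
  have hT : T.IsSymmetric := by
    intro a b
    rw [← e.apply_symm_apply a, ← e.apply_symm_apply b, hTe, hTe, he, he,
      hK.inv.isHermitian.mulVec_dotProduct, ← hM.isHermitian.mulVec_dotProduct]
  have hTu₀ : T (e u₀) = μ₀⁻¹ • e u₀ := by
    rw [hTe, ← map_smul, show M *ᵥ u₀ = μ₀⁻¹ • (K *ᵥ u₀) by rw [hu₀, inv_smul_smul₀ hμ₀.ne'],
      mulVec_smul, hKK]
  have hray : ∀ θ z, z ≠ 0 → T z = θ • z → ⟪z, e u₀⟫_ℝ = 0 → θ ≤ μ₁⁻¹ := by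
    intro θ z hz hTz hzu₀
    rw [← e.apply_symm_apply z] at hz hTz hzu₀
    set u := e.symm z
    rw [hTe, ← map_smul, e.injective.eq_iff] at hTz
    rw [he] at hzu₀
    have hu : u ≠ 0 := by rintro hu; simp [hu] at hz
    have hMu : M *ᵥ u = θ • (K *ᵥ u) := by rw [← mulVec_smul, ← hTz, hKK']
    have hθ := hM.pos_of_mulVec_eq_smul_mulVec hK hu hMu
    rw [le_inv_comm₀ hθ hμ₁]
    exact hmin θ⁻¹ u hu (by rw [hMu, inv_smul_smul₀ hθ.ne']) hzu₀
  have key := hT.norm_sub_le_of_apply_eq_smul_sub hTu₀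
    (by rw [hnorm, weightedNorm, hu₀1, Real.sqrt_one])
    (fun x hx => hT.inner_map_self_le_of_inner_eq_zero hTu₀ hray hx) hgap
    (by rw [hTe, hw, hKK, map_sub, map_smul]) (by rwa [hnorm]) (by rwa [he])
  rwa [← map_sub, ← real_inner_self_eq_norm_sq, he, hnorm, hnorm] at key

theorem Matrix.mulVec_inv_smul_eq_of_residual (hK : IsUnit K.det) (hs : s ≠ 0)
    {v p q r : n → ℝ} (hq : q = s • p - M *ᵥ v)
    (hr : r = K⁻¹ *ᵥ (K *ᵥ v - p) + s⁻¹ • (K⁻¹ *ᵥ q)) :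
    M *ᵥ (s⁻¹ • v) = K *ᵥ (s • s⁻¹ • v - r) := by
  have hKK (x : n → ℝ) : K *ᵥ (K⁻¹ *ᵥ x) = x := by
    rw [mulVec_mulVec, mul_nonsing_inv _ hK, one_mulVec]
  rw [hr, hq, smul_inv_smul₀ hs, mulVec_sub, mulVec_add, mulVec_smul K, hKK, hKK, smul_sub,
    inv_smul_smul₀ hs, mulVec_smul]
  abel

theorem Matrix.inv_mulVec_eq_of_residual (hM : IsUnit M.det) (hs : s ≠ 0) {v p q : n → ℝ}
    (hq : q = s • p - M *ᵥ v) :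
    M⁻¹ *ᵥ p = s⁻¹ • v + s⁻¹ • (M⁻¹ *ᵥ q) := by
  rw [hq, mulVec_sub, mulVec_smul, mulVec_mulVec, nonsing_inv_mul _ hM, one_mulVec, smul_sub,
    inv_smul_smul₀ hs]
  abel

theorem Matrix.PosDef.weightedNorm_inv_mulVec_sub_le (hM : M.PosDef) (hK : K.PosDef)
    (hμ₀ : 0 < μ₀) (hμ₁ : 0 < μ₁) (hu₀ : K *ᵥ u₀ = μ₀ • (M *ᵥ u₀))
    (hu₀1 : u₀ ⬝ᵥ (M *ᵥ u₀) = 1)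
    (hmin : ∀ μ z, z ≠ 0 → K *ᵥ z = μ • (M *ᵥ z) → z ⬝ᵥ (M *ᵥ u₀) = 0 → μ₁ ≤ μ)
    (hgap : μ₁⁻¹ < μ₀⁻¹) (hs : 0 < s) {v p q r : n → ℝ} (hq : q = s • p - M *ᵥ v)
    (hr : r = K⁻¹ *ᵥ (K *ᵥ v - p) + s⁻¹ • (K⁻¹ *ᵥ q)) (hdom : s / 2 ≤ v ⬝ᵥ (M *ᵥ u₀))
    (hsmall : 8 * M.weightedNorm r ≤ μ₀⁻¹ - μ₁⁻¹) :
    M.weightedNorm (M⁻¹ *ᵥ p - u₀) ≤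
      3 * (|(s ^ 2)⁻¹ * (s ^ 2 - v ⬝ᵥ (M *ᵥ v))| + (μ₀⁻¹ - μ₁⁻¹)⁻¹ * M.weightedNorm r +
        s⁻¹ * M.weightedNorm (M⁻¹ *ᵥ q)) := by
  set w := s⁻¹ • v
  have hw := mulVec_inv_smul_eq_of_residual hK.det_pos.ne'.isUnit hs.ne' hq hr
  have hc : 1 / 2 ≤ w ⬝ᵥ (M *ᵥ u₀) := by
    rw [smul_dotProduct, smul_eq_mul, le_inv_mul_iff₀ hs]; linarith
  have hρ : (s ^ 2)⁻¹ * (s ^ 2 - v ⬝ᵥ (M *ᵥ v)) = 1 - w ⬝ᵥ (M *ᵥ w) := by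
    simp only [w, mulVec_smul, smul_dotProduct, dotProduct_smul, smul_eq_mul]
    field_simp
  have key := hM.weightedNorm_sub_le_of_mulVec_eq hK hμ₀ hμ₁ hu₀ hu₀1 hmin hgap hw hsmall hc
  rw [hρ, inv_mul_eq_div (μ₀⁻¹ - μ₁⁻¹)]
  calc M.weightedNorm (M⁻¹ *ᵥ p - u₀)
      = M.weightedNorm ((w - u₀) + s⁻¹ • (M⁻¹ *ᵥ q)) := by
        rw [inv_mulVec_eq_of_residual hM.det_pos.ne'.isUnit hs.ne' hq]
        congr 1; abel
    _ ≤ M.weightedNorm (w - u₀) + s⁻¹ * M.weightedNorm (M⁻¹ *ᵥ q) := by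
        refine (hM.weightedNorm_add_le _ _).trans_eq ?_
        rw [weightedNorm_smul, abs_of_pos (inv_pos.2 hs)]
    _ ≤ _ := by
        have : 0 ≤ s⁻¹ * M.weightedNorm (M⁻¹ *ᵥ q) := by unfold weightedNorm; positivity
        linarith

end GeneralizedEigenproblem

theorem stmt9_general
    {Γ : Type*}
    (N : ℕ)
    (M : Matrix (Fin N) (Fin N) ℝ)
    (hMsymm : Mᵀ = M)
    (hMpos : ∀ z : Fin N → ℝ, z ≠ 0 → 0 < z ⬝ᵥ (M *ᵥ z))
    (Mnorm : (Fin N → ℝ) → ℝ)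
    (hMnorm : Mnorm = fun z => Real.sqrt (z ⬝ᵥ (M *ᵥ z)))
    (K : Γ → Matrix (Fin N) (Fin N) ℝ)
    (hKsymm : ∀ y, (K y)ᵀ = K y)
    (hKpos : ∀ y, ∀ z : Fin N → ℝ, z ≠ 0 → 0 < z ⬝ᵥ (K y *ᵥ z))
    (μh μ2 : Γ → ℝ) (uh : Γ → Fin N → ℝ)
    (hμh_pos : ∀ y, 0 < μh y)
    (hμh_eig : ∀ y, K y *ᵥ uh y = μh y • (M *ᵥ uh y))
    (hμh_min : ∀ y (μ : ℝ) (z : Fin N → ℝ), z ≠ 0 → K y *ᵥ z = μ • (M *ᵥ z) → μh y ≤ μ)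
    (hμ2_eig : ∀ y, ∃ z : Fin N → ℝ, z ≠ 0 ∧ K y *ᵥ z = μ2 y • (M *ᵥ z))
    (hμ2_min : ∀ y (μ : ℝ) (z : Fin N → ℝ), z ≠ 0 → K y *ᵥ z = μ • (M *ᵥ z) →
      z ⬝ᵥ (M *ᵥ uh y) = 0 → μ2 y ≤ μ)
    (huh_norm : ∀ y, uh y ⬝ᵥ (M *ᵥ uh y) = 1)
    (lamhat : Γ → ℝ) (hlamhat : lamhat = fun y => (μh y)⁻¹ - (μ2 y)⁻¹)
    (lamhatstar : ℝ) (hlhs_pos : 0 < lamhatstar) (hlhs : ∀ y, lamhatstar ≤ lamhat y)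
    (PA : (Γ → ℝ) → Γ → ℝ)
    (PAv : (Γ → Fin N → ℝ) → Γ → Fin N → ℝ)
    (RA : (Γ → ℝ) → Γ → ℝ) (hRA : RA = fun g y => g y - PA g y)
    (RAv : (Γ → Fin N → ℝ) → Γ → Fin N → ℝ) (hRAv : RAv = fun g y => g y - PAv g y)
    (s : Γ → ℝ) (v : Γ → Fin N → ℝ)
    (Kv : Γ → Fin N → ℝ) (hKv : Kv = fun y => K y *ᵥ v y)
    (hfp1 : PAv (fun y => s y • PAv Kv y) = fun y => M *ᵥ v y)
    (hfp2 : PA (fun y => (s y) ^ 2 - v y ⬝ᵥ (M *ᵥ v y)) = fun _ => 0)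
    (sstar : ℝ) (hsstar : 0 < sstar) (hs_lb : ∀ y, sstar ≤ s y)
    (hdom : ∀ y, s y / 2 ≤ v y ⬝ᵥ (M *ᵥ uh y))
    (sPKv : Γ → Fin N → ℝ) (hsPKv : sPKv = fun y => s y • PAv Kv y)
    (uA : Γ → Fin N → ℝ) (huA : uA = fun y => M⁻¹ *ᵥ PAv Kv y)
    (r : Γ → Fin N → ℝ)
    (hr : r = fun y => (K y)⁻¹ *ᵥ RAv Kv y + (s y)⁻¹ • ((K y)⁻¹ *ᵥ RAv sPKv y))
    (ρf : Γ → ℝ)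
    (hρf : ρf = fun y => ((s y) ^ 2)⁻¹ * RA (fun z => (s z) ^ 2 - v z ⬝ᵥ (M *ᵥ v z)) y)
    (hr_small : ∃ rstar : ℝ, rstar < 1 / 8 ∧ ∀ y, (lamhat y)⁻¹ * Mnorm (r y) ≤ rstar)
    :
    ∃ C : ℝ, 0 < C ∧ ∀ y,
      Mnorm (uA y - uh y) ≤
        C * (|ρf y| + (lamhat y)⁻¹ * Mnorm (r y) +
          (s y)⁻¹ * Mnorm (M⁻¹ *ᵥ RAv sPKv y)) := by
  obtain ⟨rstar, hrstar, hr_le⟩ := hr_small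
  obtain rfl : Mnorm = M.weightedNorm := hMnorm
  subst hlamhat huA
  have hM := PosDef.of_transpose_eq hMsymm hMpos
  refine ⟨3, by norm_num, fun y => ?_⟩
  have hgap : 0 < (μh y)⁻¹ - (μ2 y)⁻¹ := hlhs_pos.trans_le (hlhs y)
  have hμ2 : 0 < μ2 y := by
    obtain ⟨z, hz, hKz⟩ := hμ2_eig y
    exact (hμh_pos y).trans_le (hμh_min y _ z hz hKz)
  have hsmall : 8 * M.weightedNorm (r y) ≤ (μh y)⁻¹ - (μ2 y)⁻¹ := by
    have := hr_le y
    rw [inv_mul_le_iff₀ hgap] at this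
    nlinarith
  have hρ : ρf y = ((s y) ^ 2)⁻¹ * ((s y) ^ 2 - v y ⬝ᵥ (M *ᵥ v y)) := by
    simp only [hρf, hRA, congrFun hfp2 y, sub_zero]
  rw [hρ]
  exact hM.weightedNorm_inv_mulVec_sub_le (PosDef.of_transpose_eq (hKsymm y) (hKpos y))
    (hμh_pos y) hμ2 (hμh_eig y) (huh_norm y) (hμ2_min y) (sub_pos.mp hgap)
    (hsstar.trans_le (hs_lb y)) (by simp only [hRAv, hsPKv, hfp1])
    (by simp only [hr, hRAv, hKv]) (hdom y) hsmall

/-- Proposition 5.7 of Hakula–Laaksonen, eigenvector bound: pointwise error between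
the dominant fixed point `u_A` and the exact semidiscrete eigenvector `u_h`. -/
theorem stmt9
    {Γ : Type*} [MeasurableSpace Γ] (ν : Measure Γ) [IsProbabilityMeasure ν]
    {ι : Type*} [Fintype ι] [DecidableEq ι]
    (Λ : ι → Γ → ℝ)
    (hΛmeas : ∀ α, Measurable (Λ α))
    (hΛbdd : ∀ α, ∃ C : ℝ, ∀ᵐ y ∂ν, |Λ α y| ≤ C)
    (hortho : ∀ α β, (∫ y, Λ α y * Λ β y ∂ν) = if α = β then 1 else 0)
    (N : ℕ)
    (M : Matrix (Fin N) (Fin N) ℝ)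
    (hMsymm : Mᵀ = M)
    (hMpos : ∀ z : Fin N → ℝ, z ≠ 0 → 0 < z ⬝ᵥ (M *ᵥ z))
    (Mnorm : (Fin N → ℝ) → ℝ)
    (hMnorm : Mnorm = fun z => Real.sqrt (z ⬝ᵥ (M *ᵥ z)))
    (K : Γ → Matrix (Fin N) (Fin N) ℝ)
    (hKmeas : ∀ i j, Measurable fun y => K y i j)
    (hKbdd : ∃ C : ℝ, ∀ y i j, |K y i j| ≤ C)
    (hKsymm : ∀ y, (K y)ᵀ = K y)
    (hKpos : ∀ y, ∀ z : Fin N → ℝ, z ≠ 0 → 0 < z ⬝ᵥ (K y *ᵥ z))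
    (μh μ2 : Γ → ℝ) (uh : Γ → Fin N → ℝ)
    (hμh_pos : ∀ y, 0 < μh y)
    (hμh_eig : ∀ y, K y *ᵥ uh y = μh y • (M *ᵥ uh y))
    (hμh_min : ∀ y (μ : ℝ) (z : Fin N → ℝ), z ≠ 0 → K y *ᵥ z = μ • (M *ᵥ z) → μh y ≤ μ)
    (hμ2_eig : ∀ y, ∃ z : Fin N → ℝ, z ≠ 0 ∧ K y *ᵥ z = μ2 y • (M *ᵥ z))
    (hμ2_min : ∀ y (μ : ℝ) (z : Fin N → ℝ), z ≠ 0 → K y *ᵥ z = μ • (M *ᵥ z) →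
      z ⬝ᵥ (M *ᵥ uh y) = 0 → μ2 y ≤ μ)
    (huh_norm : ∀ y, uh y ⬝ᵥ (M *ᵥ uh y) = 1)
    (lamhat : Γ → ℝ) (hlamhat : lamhat = fun y => (μh y)⁻¹ - (μ2 y)⁻¹)
    (lamhatstar : ℝ) (hlhs_pos : 0 < lamhatstar) (hlhs : ∀ y, lamhatstar ≤ lamhat y)
    (PA : (Γ → ℝ) → Γ → ℝ)
    (hPA : PA = fun g y => ∑ α, (∫ z, g z * Λ α z ∂ν) * Λ α y)
    (PAv : (Γ → Fin N → ℝ) → Γ → Fin N → ℝ)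
    (hPAv : PAv = fun g y i => ∑ α, (∫ z, g z i * Λ α z ∂ν) * Λ α y)
    (RA : (Γ → ℝ) → Γ → ℝ) (hRA : RA = fun g y => g y - PA g y)
    (RAv : (Γ → Fin N → ℝ) → Γ → Fin N → ℝ) (hRAv : RAv = fun g y => g y - PAv g y)
    (s : Γ → ℝ) (v : Γ → Fin N → ℝ)
    (hs_mem : ∃ c : ι → ℝ, s = fun y => ∑ α, c α * Λ α y)
    (hv_mem : ∃ c : ι → Fin N → ℝ, v = fun y i => ∑ α, c α i * Λ α y)
    (Kv : Γ → Fin N → ℝ) (hKv : Kv = fun y => K y *ᵥ v y)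
    (hfp1 : PAv (fun y => s y • PAv Kv y) = fun y => M *ᵥ v y)
    (hfp2 : PA (fun y => (s y) ^ 2 - v y ⬝ᵥ (M *ᵥ v y)) = fun _ => 0)
    (sstar : ℝ) (hsstar : 0 < sstar) (hs_lb : ∀ y, sstar ≤ s y)
    (huh_sign : ∀ y, 0 ≤ v y ⬝ᵥ (M *ᵥ uh y))
    (hdom : ∀ y, s y / 2 ≤ v y ⬝ᵥ (M *ᵥ uh y))
    (sPKv : Γ → Fin N → ℝ) (hsPKv : sPKv = fun y => s y • PAv Kv y)
    (uA : Γ → Fin N → ℝ) (huA : uA = fun y => M⁻¹ *ᵥ PAv Kv y)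
    (μA : Γ → ℝ)
    (hμA_mem : ∃ c : ι → ℝ, μA = fun y => ∑ α, c α * Λ α y)
    (hμA : PA (fun y => s y * μA y) = fun _ => 1)
    (r : Γ → Fin N → ℝ)
    (hr : r = fun y => (K y)⁻¹ *ᵥ RAv Kv y + (s y)⁻¹ • ((K y)⁻¹ *ᵥ RAv sPKv y))
    (ρf : Γ → ℝ)
    (hρf : ρf = fun y => ((s y) ^ 2)⁻¹ * RA (fun z => (s z) ^ 2 - v z ⬝ᵥ (M *ᵥ v z)) y)
    (hr_small : ∃ rstar : ℝ, rstar < 1 / 8 ∧ ∀ y, (lamhat y)⁻¹ * Mnorm (r y) ≤ rstar)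
    (hρ_small : ∃ ρstar : ℝ, ρstar < 1 / 2 ∧ ∀ y, |ρf y| ≤ ρstar)
    :
    ∃ C : ℝ, 0 < C ∧ ∀ y,
      Mnorm (uA y - uh y) ≤
        C * (|ρf y| + (lamhat y)⁻¹ * Mnorm (r y) +
          (s y)⁻¹ * Mnorm (M⁻¹ *ᵥ RAv sPKv y)) :=
  stmt9_general N M hMsymm hMpos Mnorm hMnorm K hKsymm hKpos μh μ2 uh hμh_pos hμh_eig hμh_min
    hμ2_eig hμ2_min huh_norm lamhat hlamhat lamhatstar hlhs_pos hlhs PA PAv RA hRA RAv hRAv s v Kv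
    hKv hfp1 hfp2 sstar hsstar hs_lb hdom sPKv hsPKv uA huA r hr ρf hρf hr_small
end

section
/- Suppose ŝ ∈ ℝ^P and v̂ ∈ ℝ^{PN} satisfy F(ŝ, v̂) = 0 and Δ(ŝ) is invertible. Then there exist a neighborhood U of 0 in ℝ^{PN}, a neighborhood V of 0 in ℝ^P, and a continuously differentiable map t̂ : U → V with t̂(0) = 0 such that, for every ŵ ∈ U, t̂(ŵ) is the unique element t of V with F(ŝ + t, v̂ + ŵ) = 0; moreover the derivative of t̂ at 0 is the linear map ŵ ↦ Δ(ŝ)⁻¹ F^v(v̂, ŵ). -/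
/-!
Write `F(ŝ, v̂) = B(ŝ, ŝ) - W(v̂, v̂)` with the symmetric bilinear maps
`B(s, t)_α = sᵀ G^(α) t` and `W(v, w)_α = vᵀ (G^(α) ⊗ M) w`. The derivative of
`(w, t) ↦ F(ŝ + t, v̂ + w)` at `0` is `(w, t) ↦ 2 B(ŝ, t) - 2 W(v̂, w) = 2 Δ(ŝ) t - 2 F^v(v̂, w)`,
so its partial derivative in `t` is invertible and the implicit function theorem applies.
Differentiating `F(ŝ + t̂(w), v̂ + w) = 0` at `w = 0` gives `Δ(ŝ) t̂'(0) w = F^v(v̂, w)`.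
-/

open Matrix Filter Topology

section KroneckerPairing

variable {ι R X : Type*} [Fintype ι] [CommRing R] [AddCommGroup X] [Module R X]

/-- For `b` the product on `R` this is `(s, t) ↦ (sᵀ G^(α) t)_α`; for `b` the form of a matrix `M`
it is `(v, w) ↦ (vᵀ (G^(α) ⊗ M) w)_α`, where `G^(α)_{βγ} = c α β γ`. -/
def kroneckerPairing (c : ι → ι → ι → R) (b : X →ₗ[R] X →ₗ[R] R) :
    (ι → X) →ₗ[R] (ι → X) →ₗ[R] ι → R :=
  LinearMap.mk₂ R (fun x y α => ∑ β, ∑ γ, c α β γ * b (x β) (y γ))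
    (fun x x' y => funext fun α => by simp [mul_add, Finset.sum_add_distrib])
    (fun r x y => funext fun α => by simp [Finset.mul_sum, mul_left_comm])
    (fun x y y' => funext fun α => by simp [mul_add, Finset.sum_add_distrib])
    (fun r x y => funext fun α => by simp [Finset.mul_sum, mul_left_comm])

theorem kroneckerPairing_apply (c : ι → ι → ι → R) (b : X →ₗ[R] X →ₗ[R] R) (x y : ι → X)
    (α : ι) : kroneckerPairing c b x y α = ∑ β, ∑ γ, c α β γ * b (x β) (y γ) :=
  rfl

theorem kroneckerPairing_comm {c : ι → ι → ι → R} (hc : ∀ α β γ, c α β γ = c α γ β)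
    {b : X →ₗ[R] X →ₗ[R] R} (hb : ∀ x y, b x y = b y x) (x y : ι → X) :
    kroneckerPairing c b x y = kroneckerPairing c b y x := by
  funext α
  simp only [kroneckerPairing_apply]
  rw [Finset.sum_comm]
  simp only [hc α, hb]

end KroneckerPairing

section Bilinear

variable {𝕜 E F G : Type*} [NontriviallyNormedField 𝕜]
  [NormedAddCommGroup E] [NormedSpace 𝕜 E] [NormedAddCommGroup F] [NormedSpace 𝕜 F]
  [NormedAddCommGroup G] [NormedSpace 𝕜 G]

noncomputable def LinearMap.toContinuousLinearMap₂ [CompleteSpace 𝕜] [FiniteDimensional 𝕜 E]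
    [FiniteDimensional 𝕜 F] (L : E →ₗ[𝕜] F →ₗ[𝕜] G) : E →L[𝕜] F →L[𝕜] G :=
  LinearMap.toContinuousLinearMap (LinearMap.toContinuousLinearMap.toLinearMap ∘ₗ L)

@[simp] theorem LinearMap.toContinuousLinearMap₂_apply [CompleteSpace 𝕜] [FiniteDimensional 𝕜 E]
    [FiniteDimensional 𝕜 F] (L : E →ₗ[𝕜] F →ₗ[𝕜] G) (x : E) (y : F) :
    L.toContinuousLinearMap₂ x y = L x y :=
  rfl

theorem ContinuousLinearMap.hasFDerivAt_apply_self {B : E →L[𝕜] E →L[𝕜] G}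
    (hB : ∀ x y, B x y = B y x) (x : E) : HasFDerivAt (fun y => B y y) (2 • B x) x := by
  refine (B.hasFDerivAt_of_bilinear (hasFDerivAt_id x) (hasFDerivAt_id x)).congr_fderiv ?_
  ext y
  simp [hB y x, two_smul]

theorem ContinuousLinearMap.hasFDerivAt_apply_self_sub_apply_self {B : E →L[𝕜] E →L[𝕜] G}
    {W : F →L[𝕜] F →L[𝕜] G} (hB : ∀ x y, B x y = B y x) (hW : ∀ x y, W x y = W y x)
    (a : E) (b : F) :
    HasFDerivAt (fun p : F × E => B (a + p.2) (a + p.2) - W (b + p.1) (b + p.1))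
      (2 • B a ∘L .snd 𝕜 F E - 2 • W b ∘L .fst 𝕜 F E) 0 := by
  have hBa : HasFDerivAt (fun y => B (a + y) (a + y)) (2 • B a) 0 :=
    (hasFDerivAt_comp_add_left a).2 (by rw [add_zero]; exact B.hasFDerivAt_apply_self hB a)
  have hWb : HasFDerivAt (fun x => W (b + x) (b + x)) (2 • W b) 0 :=
    (hasFDerivAt_comp_add_left b).2 (by rw [add_zero]; exact W.hasFDerivAt_apply_self hW b)
  exact (hBa.comp (f := Prod.snd) (0 : F × E) hasFDerivAt_snd).sub
    (hWb.comp (f := Prod.fst) (0 : F × E) hasFDerivAt_fst)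

end Bilinear

theorem Matrix.isInvertible_toContinuousLinearMap_mulVecLin {ι 𝕜 : Type*} [Fintype ι]
    [DecidableEq ι] [NontriviallyNormedField 𝕜] [CompleteSpace 𝕜] {A : Matrix ι ι 𝕜}
    (hA : IsUnit A) : (LinearMap.toContinuousLinearMap A.mulVecLin).IsInvertible :=
  ⟨(A.toLinearEquiv' hA.invertible).toContinuousLinearEquiv, rfl⟩

section Pairings

variable {ι : Type*} [Fintype ι] {N : ℕ}

noncomputable def scalarPairing (c : ι → ι → ι → ℝ) : (ι → ℝ) →L[ℝ] (ι → ℝ) →L[ℝ] ι → ℝ :=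
  (kroneckerPairing c (LinearMap.mul ℝ ℝ)).toContinuousLinearMap₂

noncomputable def vectorPairing (c : ι → ι → ι → ℝ) (M : Matrix (Fin N) (Fin N) ℝ) :
    (ι → Fin N → ℝ) →L[ℝ] (ι → Fin N → ℝ) →L[ℝ] ι → ℝ :=
  (kroneckerPairing c (toLinearMap₂' ℝ M)).toContinuousLinearMap₂

theorem scalarPairing_apply (c : ι → ι → ι → ℝ) (s t : ι → ℝ) (α : ι) :
    scalarPairing c s t α = ∑ β, ∑ γ, c α β γ * s β * t γ := by
  simp only [scalarPairing, LinearMap.toContinuousLinearMap₂_apply, kroneckerPairing_apply,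
    LinearMap.mul_apply', mul_assoc]

theorem vectorPairing_apply (c : ι → ι → ι → ℝ) (M : Matrix (Fin N) (Fin N) ℝ)
    (v w : ι → Fin N → ℝ) (α : ι) :
    vectorPairing c M v w α = ∑ β, ∑ γ, c α β γ * (v β ⬝ᵥ (M *ᵥ w γ)) := by
  simp only [vectorPairing, LinearMap.toContinuousLinearMap₂_apply, kroneckerPairing_apply,
    toLinearMap₂'_apply']

theorem scalarPairing_comm {c : ι → ι → ι → ℝ} (hc : ∀ α β γ, c α β γ = c α γ β)
    (s t : ι → ℝ) : scalarPairing c s t = scalarPairing c t s :=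
  kroneckerPairing_comm hc mul_comm s t

theorem vectorPairing_comm {c : ι → ι → ι → ℝ} (hc : ∀ α β γ, c α β γ = c α γ β)
    {M : Matrix (Fin N) (Fin N) ℝ} (hM : Mᵀ = M) (v w : ι → Fin N → ℝ) :
    vectorPairing c M v w = vectorPairing c M w v :=
  kroneckerPairing_comm hc (fun x y => by
    rw [toLinearMap₂'_apply', toLinearMap₂'_apply', dotProduct_mulVec, ← mulVec_transpose, hM,
      dotProduct_comm]) v w

theorem scalarPairing_eq_mulVec {c : ι → ι → ι → ℝ} (hc : ∀ α β γ, c α β γ = c β α γ)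
    (s t : ι → ℝ) : scalarPairing c s t = of (fun α β => ∑ γ, c γ α β * s γ) *ᵥ t := by
  funext α
  simp only [scalarPairing_apply, mulVec, dotProduct, of_apply, Finset.sum_mul]
  rw [Finset.sum_comm]
  refine Finset.sum_congr rfl fun γ _ => Finset.sum_congr rfl fun β _ => ?_
  rw [hc]

end Pairings

section ImplicitFunction

variable {𝕜 : Type*} [RCLike 𝕜]
  {E₁ : Type*} [NormedAddCommGroup E₁] [NormedSpace 𝕜 E₁] [CompleteSpace E₁]
  {E₂ : Type*} [NormedAddCommGroup E₂] [NormedSpace 𝕜 E₂] [CompleteSpace E₂]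
  {F : Type*} [NormedAddCommGroup F] [NormedSpace 𝕜 F] [CompleteSpace F]

theorem ContDiffAt.exists_unique_implicitFunction {f : E₁ × E₂ → F} {u : E₁ × E₂} {n : ℕ}
    (hf : ContDiffAt 𝕜 n f u) (hn : n ≠ 0)
    (hf₂ : (fderiv 𝕜 f u ∘L .inr 𝕜 E₁ E₂).IsInvertible) :
    ∃ U ∈ 𝓝 u.1, ∃ V ∈ 𝓝 u.2, ∃ ψ : E₁ → E₂, ψ u.1 = u.2 ∧ ContDiffOn 𝕜 n ψ U ∧
      (∀ x ∈ U, ψ x ∈ V ∧ f (x, ψ x) = f u ∧ ∀ y ∈ V, f (x, y) = f u → y = ψ x) ∧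
      ∀ x, fderiv 𝕜 f u (x, fderiv 𝕜 ψ u.1 x) = 0 := by
  have hn' : (n : WithTop ℕ∞) ≠ 0 := by exact_mod_cast hn
  set ψ := hf.implicitFunction hn' hf₂
  have hψu : ψ u.1 = u.2 := hf.implicitFunction_apply_self hn' hf₂
  have hψ : ContDiffAt 𝕜 n ψ u.1 := hf.contDiffAt_implicitFunction hn' hf₂
  obtain ⟨W, hW, hψW⟩ := hψ.contDiffOn le_rfl (by simp)
  obtain ⟨U₀, hU₀, V, hV, hUV⟩ :=
    mem_nhds_prod_iff.1 (hf.eventually_apply_eq_iff_implicitFunction hn' hf₂)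
  have hψV : ψ ⁻¹' V ∈ 𝓝 u.1 := hψ.continuousAt.preimage_mem_nhds (hψu ▸ hV)
  refine ⟨U₀ ∩ W ∩ ψ ⁻¹' V, inter_mem (inter_mem hU₀ hW) hψV, V, hV, ψ, hψu,
    hψW.mono fun x hx => hx.1.2, fun x hx => ⟨hx.2, (hUV (Set.mk_mem_prod hx.1.1 hx.2)).2 rfl,
      fun y hy hfy => ((hUV (Set.mk_mem_prod hx.1.1 hy)).1 hfy).symm⟩, fun x => ?_⟩
  have hchain : HasFDerivAt (fun x => f (x, ψ x))
      (fderiv 𝕜 f u ∘L (ContinuousLinearMap.id 𝕜 E₁).prod (fderiv 𝕜 ψ u.1)) u.1 := by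
    have hfd : HasFDerivAt f (fderiv 𝕜 f u) (u.1, ψ u.1) := by
      rw [hψu]
      exact (hf.differentiableAt (by exact_mod_cast hn)).hasFDerivAt
    exact hfd.comp u.1 ((hasFDerivAt_id _).prodMk
      (hψ.differentiableAt (by exact_mod_cast hn)).hasFDerivAt)
  have hconst : fderiv 𝕜 (fun x => f (x, ψ x)) u.1 = 0 :=
    (Filter.EventuallyEq.fderiv_eq (hf.eventually_apply_implicitFunction hn' hf₂)).trans
      (fderiv_const_apply _)
  simpa [hconst] using congrArg (· x) hchain.fderiv.symm

end ImplicitFunction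

theorem stmt12_general
    {ι : Type*} [Fintype ι] [DecidableEq ι]
    (c : ι → ι → ι → ℝ)
    (hc1 : ∀ α β γ, c α β γ = c β α γ)
    (hc2 : ∀ α β γ, c α β γ = c α γ β)
    (N : ℕ)
    (M : Matrix (Fin N) (Fin N) ℝ)
    (hMsymm : Mᵀ = M)
    (F : (ι → ℝ) → (ι → Fin N → ℝ) → ι → ℝ)
    (hF : F = fun sh vh α => (∑ β, ∑ γ, c α β γ * sh β * sh γ) -
        ∑ β, ∑ γ, c α β γ * (vh β ⬝ᵥ (M *ᵥ vh γ)))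
    (Fv : (ι → Fin N → ℝ) → (ι → Fin N → ℝ) → ι → ℝ)
    (hFv : Fv = fun vh wh α => ∑ β, ∑ γ, c α β γ * (vh β ⬝ᵥ (M *ᵥ wh γ)))
    (Δ : (ι → ℝ) → Matrix ι ι ℝ)
    (hΔ : Δ = fun sh => Matrix.of fun α β => ∑ γ, c γ α β * sh γ)
    (sh : ι → ℝ) (vh : ι → Fin N → ℝ)
    (hsol : F sh vh = 0)
    (hinv : IsUnit (Δ sh)) :
    ∃ U ∈ nhds (0 : ι → Fin N → ℝ), ∃ V ∈ nhds (0 : ι → ℝ),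
      ∃ t : (ι → Fin N → ℝ) → ι → ℝ,
        t 0 = 0 ∧ ContDiffOn ℝ 1 t U ∧
        (∀ w ∈ U, t w ∈ V ∧ F (sh + t w) (vh + w) = 0 ∧
          ∀ t' ∈ V, F (sh + t') (vh + w) = 0 → t' = t w) ∧
        (∀ w : ι → Fin N → ℝ, fderiv ℝ t 0 w = (Δ sh)⁻¹ *ᵥ Fv vh w) := by
  set B := scalarPairing c
  set W := vectorPairing c M
  have hFBW : F = fun s v => B s s - W v v := by
    funext s v α
    simp only [hF, Pi.sub_apply, B, W, scalarPairing_apply, vectorPairing_apply]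
  have hBΔ : ∀ t, B sh t = Δ sh *ᵥ t := by
    rw [hΔ]
    exact scalarPairing_eq_mulVec hc1 sh
  have hWFv : ∀ w, W vh w = Fv vh w := fun w => by
    funext α
    rw [hFv, vectorPairing_apply]
  set f : (ι → Fin N → ℝ) × (ι → ℝ) → ι → ℝ := fun p => F (sh + p.2) (vh + p.1)
  have hf' : HasFDerivAt f (2 • B sh ∘L .snd ℝ _ _ - 2 • W vh ∘L .fst ℝ _ _) 0 := by
    simp only [f, hFBW]
    exact ContinuousLinearMap.hasFDerivAt_apply_self_sub_apply_self
      (scalarPairing_comm hc2) (vectorPairing_comm hc2 hMsymm) sh vh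
  have hf₂ : (fderiv ℝ f 0 ∘L .inr ℝ _ _).IsInvertible := by
    have h : fderiv ℝ f 0 ∘L .inr ℝ _ _ =
        LinearMap.toContinuousLinearMap ((2 : ℝ) • Δ sh).mulVecLin := by
      ext1 t
      simp [hf'.fderiv, hBΔ, two_smul]
    rw [h]
    exact isInvertible_toContinuousLinearMap_mulVecLin
      (by simpa using hinv.smul (Units.mk0 (2 : ℝ) two_ne_zero))
  have hfC : ContDiffAt ℝ (1 : ℕ) f 0 := by
    simp only [f, hFBW]
    fun_prop
  obtain ⟨U, hU, V, hV, t, ht0, htC, ht, htD⟩ := hfC.exists_unique_implicitFunction one_ne_zero hf₂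
  refine ⟨U, hU, V, hV, t, ht0, by exact_mod_cast htC, fun w hw => by simpa [f, hsol] using ht w hw,
    fun w => ?_⟩
  have hlin : Δ sh *ᵥ fderiv ℝ t 0 w = Fv vh w := by
    simpa [hf'.fderiv, hBΔ, hWFv, sub_eq_zero, funext_iff] using htD w
  have := hinv.invertible
  exact (inv_mulVec_eq_vec hlin.symm).symm

/-- Implicit function step in the proof of Theorem 5.8 of Hakula–Laaksonen: near a zero
`(ŝ, v̂)` of `F` with `Δ(ŝ)` invertible there is a unique local C¹ implicit function
`t̂(ŵ)` with `F(ŝ + t̂(ŵ), v̂ + ŵ) = 0`, whose derivative at `0` is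
`ŵ ↦ Δ(ŝ)⁻¹ F^v(v̂, ŵ)`. -/
theorem stmt12
    {ι : Type*} [Fintype ι] [DecidableEq ι]
    (c : ι → ι → ι → ℝ)
    (hc1 : ∀ α β γ, c α β γ = c β α γ)
    (hc2 : ∀ α β γ, c α β γ = c α γ β)
    (N : ℕ)
    (M : Matrix (Fin N) (Fin N) ℝ)
    (hMsymm : Mᵀ = M)
    (hMpos : ∀ z : Fin N → ℝ, z ≠ 0 → 0 < z ⬝ᵥ (M *ᵥ z))
    (F : (ι → ℝ) → (ι → Fin N → ℝ) → ι → ℝ)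
    (hF : F = fun sh vh α => (∑ β, ∑ γ, c α β γ * sh β * sh γ) -
        ∑ β, ∑ γ, c α β γ * (vh β ⬝ᵥ (M *ᵥ vh γ)))
    (Fv : (ι → Fin N → ℝ) → (ι → Fin N → ℝ) → ι → ℝ)
    (hFv : Fv = fun vh wh α => ∑ β, ∑ γ, c α β γ * (vh β ⬝ᵥ (M *ᵥ wh γ)))
    (Δ : (ι → ℝ) → Matrix ι ι ℝ)
    (hΔ : Δ = fun sh => Matrix.of fun α β => ∑ γ, c γ α β * sh γ)
    (sh : ι → ℝ) (vh : ι → Fin N → ℝ)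
    (hsol : F sh vh = 0)
    (hinv : IsUnit (Δ sh)) :
    ∃ U ∈ nhds (0 : ι → Fin N → ℝ), ∃ V ∈ nhds (0 : ι → ℝ),
      ∃ t : (ι → Fin N → ℝ) → ι → ℝ,
        t 0 = 0 ∧ ContDiffOn ℝ 1 t U ∧
        (∀ w ∈ U, t w ∈ V ∧ F (sh + t w) (vh + w) = 0 ∧
          ∀ t' ∈ V, F (sh + t') (vh + w) = 0 → t' = t w) ∧
        (∀ w : ι → Fin N → ℝ, fderiv ℝ t 0 w = (Δ sh)⁻¹ *ᵥ Fv vh w) :=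
  stmt12_general c hc1 hc2 N M hMsymm F hF Fv hFv Δ hΔ sh vh hsol hinv
end

section
/- Let S ∈ ℝ^{PN×PN} be invertible and suppose (ŝ, v̂) ∈ ℝ^P × ℝ^{PN} satisfies v̂ = T(ŝ) S v̂ and F(ŝ, v̂) = 0, with Δ(ŝ) invertible; set û_A := S v̂. Let φ_min := ‖Δ(ŝ)⁻¹‖⁻¹ (spectral norm on ℝ^{P×P}) and ψ_max := ‖R(ŝ, v̂) S⁻¹‖ (operator norm with respect to ‖·‖_{ℝ^P⊗ℝ^N_M}), where R(ŝ, v̂)ŵ := ŵ − T(Δ(ŝ)⁻¹ F^v(v̂, ŵ)) T(ŝ)⁻¹ v̂. Let t̂ be the implicit function with t̂(0) = 0 and F(ŝ + t̂(ŵ), v̂ + ŵ) = 0 defined in a neighborhood of 0, and define one step of the spectral inverse iteration near û_A by Φ(û) := T(ŝ + t̂(S⁻¹û − v̂))⁻¹ S⁻¹ û. Then for every ε > 0 there exists δ > 0 such that ‖Φ(û) − û_A‖_{ℝ^P⊗ℝ^N_M} ≤ (ψ_max/φ_min + ε) ‖û − û_A‖_{ℝ^P⊗ℝ^N_M} whenever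 ‖û − û_A‖_{ℝ^P⊗ℝ^N_M} < δ. -/
/-!
Put `w = S⁻¹(û - û_A)`, so that `S⁻¹ û = v̂ + w` and `Φ(û) = T(ŝ + t̂(w))⁻¹ (v̂ + w)`.
Since `F` is quadratic, subtracting `F(ŝ, v̂) = 0` from `F(ŝ + t̂(w), v̂ + w) = 0` gives
`t̂(w) = Δ(ŝ)⁻¹ F^v(v̂, w) + O(‖w‖² + ‖t̂(w)‖²)`; as `t̂(w) → 0` the last term is absorbed, so
`t̂(w) = O(w)` and `t̂` is differentiable at `0`. Feeding this into `T(ŝ + t̂(w)) Φ(û) = v̂ + w`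
gives `Φ(û) - û_A = T(ŝ)⁻¹ R(ŝ, v̂) w + o(w)`. The `M`-norm is the Euclidean norm of `(I ⊗ B) u`
for any invertible `B` with `BᵀB = M`; in it the linear part contracts by `ψ_max / φ_min`, and by
equivalence of norms in finite dimension the remainder is eventually below `ε ‖û - û_A‖`.
-/

open Matrix Filter Asymptotics Topology

section Asymptotics

variable {α E F G K : Type*} [SeminormedAddCommGroup K] {l : Filter α}

theorem Asymptotics.IsBigO.of_sub_isLittleO [SeminormedAddCommGroup E] {f g : α → E} {k : α → K}
    (h : (fun x => f x - g x) =o[l] f) (hg : g =O[l] k) : f =O[l] k :=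
  (h.right_isBigO_sub.congr_right fun x => sub_sub_cancel (f x) (g x)).trans hg

variable [NormedAddCommGroup E] [NormedSpace ℝ E] [FiniteDimensional ℝ E]
  [NormedAddCommGroup F] [NormedSpace ℝ F] [FiniteDimensional ℝ F]
  [NormedAddCommGroup G] [NormedSpace ℝ G]

theorem LinearMap.isBigO_comp_of_finiteDimensional (A : E →ₗ[ℝ] G) (f : α → E) :
    (fun x => A (f x)) =O[l] f :=
  (LinearMap.toContinuousLinearMap A).isBigO_comp f l

theorem LinearMap.isLittleO_comp₂_of_tendsto (B : E →ₗ[ℝ] F →ₗ[ℝ] G) {a : α → E} {b : α → F}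
    {k : α → K} (ha : Tendsto a l (𝓝 0)) (hb : b =O[l] k) :
    (fun x => B (a x) (b x)) =o[l] k := by
  let B' : E →L[ℝ] F →L[ℝ] G :=
    LinearMap.toContinuousLinearMap (LinearMap.toContinuousLinearMap.toLinearMap ∘ₗ B)
  have hB : (fun x => B (a x) (b x)) =O[l] fun x => ‖a x‖ * ‖b x‖ :=
    B'.isBoundedBilinearMap.isBigO_comp
  refine hB.trans_isLittleO (IsLittleO.of_norm_right ?_)
  simpa using ((isLittleO_one_iff ℝ).2 ha).norm_left.mul_isBigO hb.norm_norm

end Asymptotics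

theorem Asymptotics.IsLittleO.comp_continuousLinearMap_sub {V W E : Type*}
    [NormedAddCommGroup V] [NormedSpace ℝ V] [NormedAddCommGroup W] [NormedSpace ℝ W]
    [NormedAddCommGroup E] {f : W → E} (hf : f =o[𝓝 0] id) (A : V →L[ℝ] W) (x₀ : V) :
    (fun u => f (A (u - x₀))) =o[𝓝 x₀] fun u => u - x₀ :=
  (hf.comp_tendsto ((A.continuous.comp (continuous_sub_right x₀)).tendsto' x₀ 0 (by simp))
    ).trans_isBigO (A.isBigO_sub _ _)

theorem exists_norm_sub_le_of_isLittleO {V E : Type*} [NormedAddCommGroup V] [NormedSpace ℝ V]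
    [NormedAddCommGroup E] [NormedSpace ℝ E] (J : V ≃L[ℝ] E) {g L : V → V} {x₀ : V} {κ : ℝ}
    (hL : ∀ x, ‖J (L x)‖ ≤ κ * ‖J x‖)
    (hg : (fun u => g u - x₀ - L (u - x₀)) =o[𝓝 x₀] fun u => u - x₀) :
    ∀ ε > 0, ∃ δ > 0, ∀ u, ‖J (u - x₀)‖ < δ → ‖J (g u - x₀)‖ ≤ (κ + ε) * ‖J (u - x₀)‖ := by
  intro ε hε
  have hJ : (fun u => J (g u - x₀ - L (u - x₀))) =o[𝓝 x₀] fun u => J (u - x₀) :=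
    (J.isBigO_comp _ _).trans_isLittleO (hg.trans_isBigO (J.isBigO_sub_rev _ _))
  have hz : Tendsto (fun z => x₀ + J.symm z) (𝓝 0) (𝓝 x₀) := by
    simpa using tendsto_const_nhds.add (J.symm.continuous.tendsto 0)
  obtain ⟨δ, hδ, h⟩ := Metric.eventually_nhds_iff.1 (hz.eventually (hJ.def hε))
  refine ⟨δ, hδ, fun u hu => ?_⟩
  have hu' := h (y := J (u - x₀)) (by simpa using hu)
  simp only [ContinuousLinearEquiv.symm_apply_apply, add_sub_cancel] at hu'
  calc ‖J (g u - x₀)‖ = ‖J (L (u - x₀)) + J (g u - x₀ - L (u - x₀))‖ := by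
        rw [← map_add, add_sub_cancel]
    _ ≤ κ * ‖J (u - x₀)‖ + ε * ‖J (u - x₀)‖ := norm_add_le_of_le (hL _) hu'
    _ = (κ + ε) * ‖J (u - x₀)‖ := by ring

theorem Matrix.PosDef.exists_transpose_mul_self_eq {n : Type*} [Fintype n] [DecidableEq n]
    {M : Matrix n n ℝ} (hM : M.PosDef) : ∃ B : Matrix n n ℝ, IsUnit B.det ∧ Bᵀ * B = M := by
  open scoped MatrixOrder in
  obtain ⟨B, hB⟩ := CStarAlgebra.nonneg_iff_eq_star_mul_self.mp hM.posSemidef.nonneg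
  refine ⟨B, isUnit_iff_ne_zero.mpr fun h => hM.det_pos.ne' ?_, ?_⟩
  · rw [hB, det_mul, h, mul_zero]
  · simpa [star_eq_conjTranspose] using hB.symm

namespace SpectralInverseIteration

variable {ι n : Type*} [Fintype ι]

-- In the paper's notation: `galerkin c s = Δ(s)`, `blockMul D = D ⊗ I_N` (so that
-- `T(s) = blockMul (galerkin c s)`), `tripleFormM c M = F^v`, `residual c M = F` and
-- `linearization c M s v = R(s, v)`.
def galerkin (c : ι → ι → ι → ℝ) : (ι → ℝ) →ₗ[ℝ] Matrix ι ι ℝ where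
  toFun s := Matrix.of fun α β => ∑ γ, c γ α β * s γ
  map_add' s s' := by ext; simp [mul_add, Finset.sum_add_distrib]
  map_smul' a s := by ext; simp [Finset.mul_sum, mul_left_comm]

def blockMul : Matrix ι ι ℝ →ₗ[ℝ] (ι → n → ℝ) →ₗ[ℝ] ι → n → ℝ :=
  LinearMap.mk₂ ℝ (fun D u α i => ∑ β, D α β * u β i)
    (fun _ _ _ => by ext; simp [add_mul, Finset.sum_add_distrib])
    (fun _ _ _ => by ext; simp [Finset.mul_sum, mul_assoc])
    (fun _ _ _ => by ext; simp [mul_add, Finset.sum_add_distrib])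
    (fun _ _ _ => by ext; simp [Finset.mul_sum, mul_left_comm])

theorem blockMul_mul [DecidableEq ι] (A B : Matrix ι ι ℝ) (u : ι → n → ℝ) :
    blockMul (A * B) u = blockMul A (blockMul B u) := by
  ext α i
  simp only [blockMul, LinearMap.mk₂_apply, mul_apply, Finset.sum_mul, Finset.mul_sum]
  rw [Finset.sum_comm]
  exact Finset.sum_congr rfl fun _ _ => Finset.sum_congr rfl fun _ _ => mul_assoc _ _ _

theorem blockMul_one [DecidableEq ι] (u : ι → n → ℝ) : blockMul 1 u = u := by
  ext α i
  simp [blockMul, one_apply]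

theorem blockMul_inv_add_sub [DecidableEq ι] {A E D : Matrix ι ι ℝ}
    (hAE : (A + E) * (A + E)⁻¹ = 1) (hDA : D * A = 1) (u : ι → n → ℝ) :
    blockMul (A + E)⁻¹ u - blockMul D u = -blockMul D (blockMul E (blockMul (A + E)⁻¹ u)) := by
  set x := blockMul (A + E)⁻¹ u
  have hx : blockMul A x + blockMul E x = u := by
    rw [← LinearMap.add_apply, ← map_add, ← blockMul_mul, hAE, blockMul_one]
  rw [← hx, map_add, ← blockMul_mul, hDA, blockMul_one, sub_add_cancel_left]

variable [Fintype n]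

def tripleForm (c : ι → ι → ι → ℝ) : (ι → ℝ) →ₗ[ℝ] (ι → ℝ) →ₗ[ℝ] ι → ℝ :=
  LinearMap.mk₂ ℝ (fun s τ α => ∑ β, ∑ γ, c α β γ * s β * τ γ)
    (fun _ _ _ => by ext; simp [mul_add, add_mul, Finset.sum_add_distrib])
    (fun _ _ _ => by ext; simp [Finset.mul_sum, mul_assoc, mul_left_comm])
    (fun _ _ _ => by ext; simp [mul_add, Finset.sum_add_distrib])
    (fun _ _ _ => by ext; simp [Finset.mul_sum, mul_left_comm])

def tripleFormM (c : ι → ι → ι → ℝ) (M : Matrix n n ℝ) :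
    (ι → n → ℝ) →ₗ[ℝ] (ι → n → ℝ) →ₗ[ℝ] ι → ℝ :=
  LinearMap.mk₂ ℝ (fun v w α => ∑ β, ∑ γ, c α β γ * (v β ⬝ᵥ (M *ᵥ w γ)))
    (fun _ _ _ => by ext; simp [mul_add, Finset.sum_add_distrib])
    (fun _ _ _ => by ext; simp [Finset.mul_sum, mul_left_comm])
    (fun _ _ _ => by ext; simp [mulVec_add, mul_add, Finset.sum_add_distrib])
    (fun _ _ _ => by ext; simp [mulVec_smul, Finset.mul_sum, mul_left_comm])

section Forms

variable (c : ι → ι → ι → ℝ) (M : Matrix n n ℝ)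

def residual (s : ι → ℝ) (v : ι → n → ℝ) : ι → ℝ := tripleForm c s s - tripleFormM c M v v

noncomputable def linearization [DecidableEq ι] (s : ι → ℝ) (v w : ι → n → ℝ) : ι → n → ℝ :=
  w - blockMul (galerkin c ((galerkin c s)⁻¹ *ᵥ tripleFormM c M v w)) (blockMul (galerkin c s)⁻¹ v)

variable {c M}

theorem tripleForm_comm (hc : ∀ α β γ, c α β γ = c α γ β) (s τ : ι → ℝ) :
    tripleForm c s τ = tripleForm c τ s := by
  ext α
  simp only [tripleForm, LinearMap.mk₂_apply]
  rw [Finset.sum_comm]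
  exact Finset.sum_congr rfl fun β _ => Finset.sum_congr rfl fun γ _ => by rw [hc]; ring

theorem galerkin_mulVec (hc : ∀ α β γ, c α β γ = c β α γ) (s τ : ι → ℝ) :
    galerkin c s *ᵥ τ = tripleForm c s τ := by
  ext α
  simp only [galerkin, tripleForm, LinearMap.coe_mk, AddHom.coe_mk, LinearMap.mk₂_apply, mulVec,
    dotProduct, of_apply, Finset.sum_mul]
  rw [Finset.sum_comm]
  exact Finset.sum_congr rfl fun β _ => Finset.sum_congr rfl fun γ _ => by rw [hc]

theorem tripleFormM_comm (hc : ∀ α β γ, c α β γ = c α γ β) (hM : Mᵀ = M) (v w : ι → n → ℝ) :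
    tripleFormM c M v w = tripleFormM c M w v := by
  ext α
  simp only [tripleFormM, LinearMap.mk₂_apply]
  rw [Finset.sum_comm]
  refine Finset.sum_congr rfl fun β _ => Finset.sum_congr rfl fun γ _ => ?_
  rw [hc, dotProduct_mulVec, ← mulVec_transpose, hM, dotProduct_comm]

theorem residual_add_sub (hc₁ : ∀ α β γ, c α β γ = c β α γ) (hc₂ : ∀ α β γ, c α β γ = c α γ β)
    (hM : Mᵀ = M) (s τ : ι → ℝ) (v w : ι → n → ℝ) :
    residual c M (s + τ) (v + w) - residual c M s v =
      (2 : ℝ) • (galerkin c s *ᵥ τ - tripleFormM c M v w) +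
        (tripleForm c τ τ - tripleFormM c M w w) := by
  simp only [residual, map_add, LinearMap.add_apply, galerkin_mulVec hc₁,
    tripleForm_comm hc₂ τ s, tripleFormM_comm hc₂ hM w v]
  module

theorem sub_mulVec_eq_of_residual_eq_zero [DecidableEq ι] (hc₁ : ∀ α β γ, c α β γ = c β α γ)
    (hc₂ : ∀ α β γ, c α β γ = c α γ β) (hM : Mᵀ = M) {s τ : ι → ℝ} {v w : ι → n → ℝ}
    {D : Matrix ι ι ℝ} (hD : D * galerkin c s = 1) (h₀ : residual c M s v = 0)
    (h : residual c M (s + τ) (v + w) = 0) :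
    τ - D *ᵥ tripleFormM c M v w =
      (2⁻¹ : ℝ) • (D *ᵥ (tripleFormM c M w w - tripleForm c τ τ)) := by
  have key := residual_add_sub hc₁ hc₂ hM s τ v w
  rw [h, h₀, sub_zero] at key
  have : galerkin c s *ᵥ τ - tripleFormM c M v w =
      (2⁻¹ : ℝ) • (tripleFormM c M w w - tripleForm c τ τ) := by
    rw [eq_comm, add_eq_zero_iff_eq_neg, neg_sub] at key
    rw [← key, smul_smul]; norm_num
  rw [← mulVec_smul, ← this, mulVec_sub, mulVec_mulVec, hD, one_mulVec]

end Forms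

section BlockEuclidean

variable [DecidableEq n]

noncomputable def blockEuclidean (B : Matrix n n ℝ) (hB : IsUnit B.det) :
    (ι → n → ℝ) ≃L[ℝ] EuclideanSpace ℝ (ι × n) :=
  letI := B.invertibleOfIsUnitDet hB
  ((LinearEquiv.piCongrRight fun _ => B.toLinearEquiv' ‹_›) ≪≫ₗ
    (LinearEquiv.curry ℝ ℝ ι n).symm ≪≫ₗ (WithLp.linearEquiv 2 ℝ _).symm).toContinuousLinearEquiv

theorem blockEuclidean_apply (B : Matrix n n ℝ) (hB : IsUnit B.det) (u : ι → n → ℝ) (p : ι × n) :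
    blockEuclidean B hB u p = (B *ᵥ u p.1) p.2 := rfl

theorem norm_blockEuclidean (B : Matrix n n ℝ) (hB : IsUnit B.det) (u : ι → n → ℝ) :
    ‖blockEuclidean B hB u‖ = √(∑ α, u α ⬝ᵥ ((Bᵀ * B) *ᵥ u α)) := by
  rw [EuclideanSpace.norm_eq, Fintype.sum_prod_type]
  congr 1
  refine Finset.sum_congr rfl fun α _ => ?_
  rw [← mulVec_mulVec, dotProduct_mulVec, ← mulVec_transpose, transpose_transpose]
  simp [blockEuclidean_apply, dotProduct, sq]

theorem norm_blockEuclidean_blockMul_le (B : Matrix n n ℝ) (hB : IsUnit B.det)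
    {D : Matrix ι ι ℝ} {κ : ℝ} (hκ : 0 ≤ κ)
    (hD : ∀ x : ι → ℝ, √((D *ᵥ x) ⬝ᵥ (D *ᵥ x)) ≤ κ * √(x ⬝ᵥ x)) (u : ι → n → ℝ) :
    ‖blockEuclidean B hB (blockMul D u)‖ ≤ κ * ‖blockEuclidean B hB u‖ := by
  set y : n → ι → ℝ := fun i β => (B *ᵥ u β) i
  have hcomm : ∀ α i, (B *ᵥ blockMul D u α) i = (D *ᵥ y i) α := by
    intro α i
    simp only [y, blockMul, LinearMap.mk₂_apply, mulVec, dotProduct, Finset.mul_sum]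
    rw [Finset.sum_comm]
    exact Finset.sum_congr rfl fun _ _ => Finset.sum_congr rfl fun _ _ => by ring
  have hsq : ∀ x : ι → ℝ, (D *ᵥ x) ⬝ᵥ (D *ᵥ x) ≤ κ ^ 2 * (x ⬝ᵥ x) := by
    intro x
    have h := hD x
    rw [← Real.sqrt_sq hκ, ← Real.sqrt_mul (sq_nonneg _)] at h
    exact (Real.sqrt_le_sqrt_iff
      (mul_nonneg (sq_nonneg κ) (Finset.sum_nonneg fun i _ => mul_self_nonneg (x i)))).1 h
  rw [EuclideanSpace.norm_eq, EuclideanSpace.norm_eq, ← Real.sqrt_sq hκ,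
    ← Real.sqrt_mul (sq_nonneg _)]
  refine Real.sqrt_le_sqrt ?_
  rw [Fintype.sum_prod_type_right, Fintype.sum_prod_type_right, Finset.mul_sum]
  refine Finset.sum_le_sum fun i _ => ?_
  simpa [blockEuclidean_apply, hcomm, dotProduct, sq] using hsq (y i)

end BlockEuclidean

section Expansion

variable {c : ι → ι → ι → ℝ} {M : Matrix n n ℝ} {s : ι → ℝ} {v : ι → n → ℝ}
  {t : (ι → n → ℝ) → ι → ℝ}

theorem isBigO_and_isLittleO_of_residual_eq_zero [DecidableEq ι]
    (hc₁ : ∀ α β γ, c α β γ = c β α γ) (hc₂ : ∀ α β γ, c α β γ = c α γ β) (hM : Mᵀ = M)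
    {D : Matrix ι ι ℝ} (hD : D * galerkin c s = 1) (h₀ : residual c M s v = 0)
    (ht : Tendsto t (𝓝 0) (𝓝 0)) (htF : ∀ᶠ w in 𝓝 0, residual c M (s + t w) (v + w) = 0) :
    t =O[𝓝 0] id ∧ (fun w => t w - D *ᵥ tripleFormM c M v w) =o[𝓝 0] id := by
  have hid : ∀ᶠ w in 𝓝 0, t w - D *ᵥ tripleFormM c M v w =
      (2⁻¹ : ℝ) • (D *ᵥ tripleFormM c M w w) - (2⁻¹ : ℝ) • (D *ᵥ tripleForm c (t w) (t w)) :=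
    htF.mono fun w hw => by
      rw [sub_mulVec_eq_of_residual_eq_zero hc₁ hc₂ hM hD h₀ hw, mulVec_sub, smul_sub]
  have hL : (fun w => D *ᵥ tripleFormM c M v w) =O[𝓝 0] id :=
    (D.mulVecLin ∘ₗ tripleFormM c M v).isBigO_comp_of_finiteDimensional id
  have hq : (fun w => (2⁻¹ : ℝ) • (D *ᵥ tripleFormM c M w w)) =o[𝓝 0] id :=
    (((2⁻¹ : ℝ) • D.mulVecLin).isBigO_comp_of_finiteDimensional _).trans_isLittleO
      ((tripleFormM c M).isLittleO_comp₂_of_tendsto tendsto_id (isBigO_refl _ _))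
  have hQ : (fun w => (2⁻¹ : ℝ) • (D *ᵥ tripleForm c (t w) (t w))) =o[𝓝 0] t :=
    (((2⁻¹ : ℝ) • D.mulVecLin).isBigO_comp_of_finiteDimensional _).trans_isLittleO
      ((tripleForm c).isLittleO_comp₂_of_tendsto ht (isBigO_refl _ _))
  -- `t w` also occurs in the quadratic remainder; absorbing that `o(t)` term gives `t = O(w)`.
  have hτ : t =O[𝓝 0] id := by
    refine IsBigO.of_sub_isLittleO ?_ (hL.add hq.isBigO)
    refine hQ.neg_left.congr' (hid.mono fun w hw => ?_) EventuallyEq.rfl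
    dsimp only
    rw [← sub_sub, hw]
    abel
  exact ⟨hτ, (hq.sub (hQ.trans_isBigO hτ)).congr' (hid.mono fun w hw => hw.symm) EventuallyEq.rfl⟩

theorem eventually_galerkin_mul_inv [DecidableEq ι] {X : Type*} {l : Filter X} {τ : X → ι → ℝ}
    (hA : IsUnit (galerkin c s)) (hτ : Tendsto τ l (𝓝 0)) :
    ∀ᶠ x in l, galerkin c (s + τ x) * (galerkin c (s + τ x))⁻¹ = 1 := by
  have hdet : Tendsto (fun x => (galerkin c (s + τ x)).det) l (𝓝 (galerkin c s).det) :=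
    ((galerkin c).continuous_of_finiteDimensional.matrix_det.tendsto s).comp
      (by simpa using tendsto_const_nhds.add hτ)
  exact (hdet.eventually_ne ((isUnit_iff_isUnit_det _).mp hA).ne_zero).mono fun x hx =>
    mul_nonsing_inv _ (isUnit_iff_ne_zero.mpr hx)

theorem step_sub_isLittleO [DecidableEq ι]
    (hc₁ : ∀ α β γ, c α β γ = c β α γ) (hc₂ : ∀ α β γ, c α β γ = c α γ β) (hM : Mᵀ = M)
    (hA : IsUnit (galerkin c s)) (h₀ : residual c M s v = 0)
    (ht : Tendsto t (𝓝 0) (𝓝 0)) (htF : ∀ᶠ w in 𝓝 0, residual c M (s + t w) (v + w) = 0) :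
    (fun w => blockMul (galerkin c (s + t w))⁻¹ (v + w) - blockMul (galerkin c s)⁻¹ v -
      blockMul (galerkin c s)⁻¹ (linearization c M s v w)) =o[𝓝 0] id := by
  set D := (galerkin c s)⁻¹
  have hDA : D * galerkin c s = 1 := nonsing_inv_mul _ ((isUnit_iff_isUnit_det _).mp hA)
  obtain ⟨hτ, hlin⟩ := isBigO_and_isLittleO_of_residual_eq_zero hc₁ hc₂ hM hDA h₀ ht htF
  set T := (blockMul : Matrix ι ι ℝ →ₗ[ℝ] _) ∘ₗ galerkin c
  set uA := blockMul D v
  set y := fun w => blockMul (galerkin c (s + t w))⁻¹ (v + w) - uA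
  have hy_eq : ∀ᶠ w in 𝓝 0,
      y w = blockMul D (w - T (t w) uA) - blockMul D (T (t w) (y w)) := by
    filter_upwards [eventually_galerkin_mul_inv hA ht] with w hw
    rw [(galerkin c).map_add] at hw
    have key := blockMul_inv_add_sub hw hDA (v + w)
    simp only [y, T, LinearMap.comp_apply, (galerkin c).map_add, map_add, map_sub] at key ⊢
    linear_combination (norm := module) key
  have hDTy : (fun w => blockMul D (T (t w) (y w))) =o[𝓝 0] y :=
    ((blockMul D).isBigO_comp_of_finiteDimensional fun w => T (t w) (y w)).trans_isLittleO
      (T.isLittleO_comp₂_of_tendsto ht (isBigO_refl _ _))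
  have hy : y =O[𝓝 0] id := by
    refine IsBigO.of_sub_isLittleO ?_
      (((blockMul D).isBigO_comp_of_finiteDimensional fun w => w - T (t w) uA).trans
        ((isBigO_refl _ _).sub ((T.flip uA).isBigO_comp_of_finiteDimensional t |>.trans hτ)))
    refine hDTy.neg_left.congr' (hy_eq.mono fun w hw => ?_) EventuallyEq.rfl
    dsimp only
    conv_rhs => rw [hw]
    abel
  have hlinT : (fun w => blockMul D (T (D *ᵥ tripleFormM c M v w - t w) uA)) =o[𝓝 0] id :=
    ((blockMul D ∘ₗ T.flip uA).isBigO_comp_of_finiteDimensional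
      fun w => D *ᵥ tripleFormM c M v w - t w).trans_isLittleO
      (by simpa using hlin.neg_left)
  refine (hlinT.sub (hDTy.trans_isBigO hy)).congr' (hy_eq.mono fun w hw => ?_) EventuallyEq.rfl
  change _ = y w - _
  rw [hw]
  simp only [linearization, T, LinearMap.comp_apply, map_sub, LinearMap.sub_apply]
  abel

end Expansion

end SpectralInverseIteration

open SpectralInverseIteration

/-- Theorem 5.8 (asymptotic contraction of the spectral inverse iteration) of
Hakula–Laaksonen: near a fixed point `û_A` one step of the spectral inverse iteration
contracts the error with asymptotic factor `ψ_max / φ_min`. -/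
theorem stmt13
    {ι : Type*} [Fintype ι] [DecidableEq ι]
    (c : ι → ι → ι → ℝ)
    (hc1 : ∀ α β γ, c α β γ = c β α γ)
    (hc2 : ∀ α β γ, c α β γ = c α γ β)
    (N : ℕ)
    (M : Matrix (Fin N) (Fin N) ℝ)
    (hMsymm : Mᵀ = M)
    (hMpos : ∀ z : Fin N → ℝ, z ≠ 0 → 0 < z ⬝ᵥ (M *ᵥ z))
    (F : (ι → ℝ) → (ι → Fin N → ℝ) → ι → ℝ)
    (hF : F = fun sh vh α => (∑ β, ∑ γ, c α β γ * sh β * sh γ) -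
        ∑ β, ∑ γ, c α β γ * (vh β ⬝ᵥ (M *ᵥ vh γ)))
    (Fv : (ι → Fin N → ℝ) → (ι → Fin N → ℝ) → ι → ℝ)
    (hFv : Fv = fun vh wh α => ∑ β, ∑ γ, c α β γ * (vh β ⬝ᵥ (M *ᵥ wh γ)))
    (Δ : (ι → ℝ) → Matrix ι ι ℝ)
    (hΔ : Δ = fun sh => Matrix.of fun α β => ∑ γ, c γ α β * sh γ)
    (T : (ι → ℝ) → (ι → Fin N → ℝ) → ι → Fin N → ℝ)
    (hT : T = fun sh u α i => ∑ β, Δ sh α β * u β i)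
    (MnormPN : (ι → Fin N → ℝ) → ℝ)
    (hMnormPN : MnormPN = fun u => Real.sqrt (∑ α, u α ⬝ᵥ (M *ᵥ u α)))
    (S : (ι → Fin N → ℝ) ≃ₗ[ℝ] (ι → Fin N → ℝ))
    (sh : ι → ℝ) (vh : ι → Fin N → ℝ)
    (hfix : vh = T sh (S vh))
    (hFzero : F sh vh = 0)
    (hΔinv : IsUnit (Δ sh))
    (uA : ι → Fin N → ℝ) (huA : uA = S vh)
    (Rop : (ι → Fin N → ℝ) → ι → Fin N → ℝ)
    (hRop : Rop = fun w =>
      w - T ((Δ sh)⁻¹ *ᵥ Fv vh w) (fun α i => ∑ β, (Δ sh)⁻¹ α β * vh β i))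
    (phimin : ℝ) (hphimin_pos : 0 < phimin)
    (hphimin : ∀ cc : ι → ℝ,
      Real.sqrt (((Δ sh)⁻¹ *ᵥ cc) ⬝ᵥ ((Δ sh)⁻¹ *ᵥ cc)) ≤ phimin⁻¹ * Real.sqrt (cc ⬝ᵥ cc))
    (psimax : ℝ)
    (hpsimax : ∀ w : ι → Fin N → ℝ, MnormPN (Rop (S.symm w)) ≤ psimax * MnormPN w)
    (t : (ι → Fin N → ℝ) → ι → ℝ)
    (ht0 : t 0 = 0)
    (htcont : ContinuousAt t 0)
    (htF : ∀ᶠ w in nhds (0 : ι → Fin N → ℝ), F (sh + t w) (vh + w) = 0)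
    (Φ : (ι → Fin N → ℝ) → ι → Fin N → ℝ)
    (hΦ : Φ = fun u α i =>
      ∑ β, (Δ (sh + t (S.symm u - vh)))⁻¹ α β * (S.symm u) β i) :
    ∀ ε > (0 : ℝ), ∃ δ > (0 : ℝ), ∀ u : ι → Fin N → ℝ,
      MnormPN (u - uA) < δ →
      MnormPN (Φ u - uA) ≤ (psimax / phimin + ε) * MnormPN (u - uA) := by
  obtain rfl : F = residual c M := hF
  obtain rfl : Fv = fun v w => tripleFormM c M v w := hFv
  obtain rfl : Δ = ⇑(galerkin c) := hΔ
  obtain rfl : T = fun s u => blockMul (galerkin c s) u := hT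
  obtain rfl : Rop = linearization c M sh vh := hRop
  obtain rfl : Φ = fun u => blockMul (galerkin c (sh + t (S.symm u - vh)))⁻¹ (S.symm u) := hΦ
  obtain ⟨B, hB, hBM⟩ := PosDef.exists_transpose_mul_self_eq
    (posDef_iff_dotProduct_mulVec.mpr ⟨hMsymm, fun x hx => by simpa using hMpos x hx⟩)
  set J := blockEuclidean (ι := ι) B hB
  obtain rfl : MnormPN = fun u => ‖J u‖ :=
    hMnormPN.trans (funext fun u => by rw [norm_blockEuclidean, hBM])
  set D := (galerkin c sh)⁻¹
  have hvh : S.symm uA = vh := huA ▸ S.symm_apply_apply vh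
  have huA' : uA = blockMul D vh := by
    rw [huA]
    conv_rhs => rw [hfix]
    rw [← blockMul_mul, nonsing_inv_mul _ ((isUnit_iff_isUnit_det _).mp hΔinv), blockMul_one]
  have hstep := (step_sub_isLittleO hc1 hc2 hMsymm hΔinv hFzero (ht0 ▸ htcont) htF
    ).comp_continuousLinearMap_sub (LinearMap.toContinuousLinearMap (S.symm : _ →ₗ[ℝ] _)) uA
  refine exists_norm_sub_le_of_isLittleO J
    (L := fun x => blockMul D (linearization c M sh vh (S.symm x))) (fun x => ?_)
    (hstep.congr_left fun u => ?_)
  · have hφ : 0 ≤ phimin⁻¹ := inv_nonneg.mpr hphimin_pos.le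
    calc ‖J (blockMul D (linearization c M sh vh (S.symm x)))‖
        ≤ phimin⁻¹ * ‖J (linearization c M sh vh (S.symm x))‖ :=
          norm_blockEuclidean_blockMul_le B hB hφ hphimin _
      _ ≤ phimin⁻¹ * (psimax * ‖J x‖) := mul_le_mul_of_nonneg_left (hpsimax x) hφ
      _ = psimax / phimin * ‖J x‖ := by ring
  · have hsu : S.symm u = vh + S.symm (u - uA) := by rw [map_sub, hvh, add_sub_cancel]
    rw [hsu, add_sub_cancel_left, huA']
    rfl
end
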